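/- arXiv:1208.0062 — 6 statements merged into one kernel-verified Lean document; each statement's English description precedes it below -/
import Mathlib

section
/- If f : [0,1] → ℝ is of bounded variation, then for each Haar wavelet b_{kj}(t) = λ(2^k t − j), where λ(t) = 1 on [0,1/2), −1 on [1/2,1), and 0 otherwise, the inner product satisfies |⟨f, b_{kj}⟩| ≤ 2^{−k−1} ∫_{j 2^{−k}}^{(j+1) 2^{−k}} |f'(t)| dt, where f' denotes the weak derivative of f. -/
open MeasureTheory Set

/-- The Haar mother wavelet: 1 on [0,1/2), -1 on [1/2,1), 0 otherwise. -/
noncomputable def haarMother : ℝ → ℝ :=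
  fun t => if t ∈ Set.Ico (0:ℝ) (1/2) then 1 else if t ∈ Set.Ico (1/2:ℝ) 1 then -1 else 0

/-- The Haar wavelet `b_{kj}(t) = λ(2^k t - j)`. -/
noncomputable def haar (k j : ℕ) (t : ℝ) : ℝ := haarMother (2 ^ k * t - j)

/-! On the dyadic interval `[a, b]` with midpoint `m` and half-length `h = 2^{-k-1}` the wavelet
is `1` on `[a, m)` and `-1` on `[m, b)`, so shifting the second half onto the first gives
`⟨f, b_{kj}⟩ = ∫_a^m (f t - f (t + h)) dt`. Each integrand equals `-∫_t^{t+h} f'`, hence is bounded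
by `∫_a^b |f'|`, and integrating over an interval of length `h` gives the factor `2^{-k-1}`. -/

theorem haarMother_eq_indicator_sub_indicator :
    haarMother = (Ico 0 (1/2)).indicator 1 - (Ico (1/2) 1).indicator 1 := by
  ext t
  simp only [haarMother, Pi.sub_apply, indicator_apply, Pi.one_apply]
  split_ifs with h₁ h₂ <;> norm_num
  exact (not_le.2 h₁.2) h₂.1

theorem haar_eq_indicator_sub_indicator (k j : ℕ) :
    haar k j =
      (Ico ((j : ℝ) * 2 ^ (-(k : ℤ))) ((j + 1 / 2 : ℝ) * 2 ^ (-(k : ℤ)))).indicator 1 -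
      (Ico ((j + 1 / 2 : ℝ) * 2 ^ (-(k : ℤ)))
        ((j + 1 : ℝ) * 2 ^ (-(k : ℤ)))).indicator 1 := by
  have h2k : (0 : ℝ) < 2 ^ k := by positivity
  have hmem (p q t : ℝ) : 2 ^ k * t - j ∈ Ico p q ↔
      t ∈ Ico ((j + p) * (2 : ℝ) ^ (-(k : ℤ))) ((j + q) * (2 : ℝ) ^ (-(k : ℤ))) := by
    simp only [mem_Ico, zpow_neg, zpow_natCast, ← div_eq_mul_inv, div_le_iff₀ h2k, lt_div_iff₀ h2k]
    constructor <;> rintro ⟨h1, h2⟩ <;> constructor <;> linarith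
  ext t
  simp only [haar, haarMother_eq_indicator_sub_indicator, Pi.sub_apply, indicator_apply, hmem,
    Pi.one_apply, add_zero]

theorem intervalIntegral_mul_indicator_one_Ico {f : ℝ → ℝ} {u v a b : ℝ} (hab : a ≤ b)
    (hsub : Icc a b ⊆ Icc u v) :
    ∫ t in u..v, f t * (Ico a b).indicator 1 t = ∫ t in a..b, f t := by
  have huv : u ≤ v := (hsub (left_mem_Icc.2 hab)).1.trans (hsub (left_mem_Icc.2 hab)).2
  have hcut : (Ioc u v ∩ Ico a b : Set ℝ) =ᵐ[volume] (Ico a b : Set ℝ) := by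
    nth_rw 2 [← inter_eq_right.2 (Ico_subset_Icc_self.trans hsub)]
    exact Ioc_ae_eq_Icc.inter (ae_eq_refl _)
  simp only [← indicator_mul_right, Pi.one_apply, mul_one]
  rw [intervalIntegral.integral_of_le huv, intervalIntegral.integral_of_le hab,
    setIntegral_indicator measurableSet_Ico, setIntegral_congr_set (hcut.trans Ico_ae_eq_Ioc)]

theorem IntervalIntegrable.mul_indicator_one {f : ℝ → ℝ} {u v : ℝ} {s : Set ℝ}
    (hf : IntervalIntegrable f volume u v) (hs : MeasurableSet s) :
    IntervalIntegrable (fun t => f t * s.indicator 1 t) volume u v := by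
  simp only [← indicator_mul_right, Pi.one_apply, mul_one]
  exact ⟨hf.1.indicator hs, hf.2.indicator hs⟩

theorem continuousOn_of_sub_eq_intervalIntegral {f g : ℝ → ℝ} {a b : ℝ}
    (hg : IntervalIntegrable g volume a b)
    (hf : ∀ x ∈ Icc a b, ∀ y ∈ Icc a b, f y - f x = ∫ s in x..y, g s) :
    ContinuousOn f (Icc a b) := by
  rcases lt_or_ge b a with hba | hab
  · simp [Icc_eq_empty_of_lt hba]
  have hprim := intervalIntegral.continuousOn_primitive_interval' hg left_mem_uIcc
  rw [uIcc_of_le hab] at hprim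
  refine ContinuousOn.congr (f := fun y => f a + ∫ s in a..y, g s)
    (continuousOn_const.add hprim) fun y hy => ?_
  linarith [hf a (left_mem_Icc.2 hab) y hy]

theorem abs_sub_le_intervalIntegral_abs {f g : ℝ → ℝ} {a b x y : ℝ}
    (hg : IntervalIntegrable g volume a b)
    (hf : ∀ x ∈ Icc a b, ∀ y ∈ Icc a b, f y - f x = ∫ s in x..y, g s)
    (hx : x ∈ Icc a b) (hy : y ∈ Icc a b) (hxy : x ≤ y) :
    |f y - f x| ≤ ∫ s in a..b, |g s| := by
  rw [hf x hx y hy]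
  calc |∫ s in x..y, g s| ≤ ∫ s in x..y, |g s| :=
        intervalIntegral.abs_integral_le_integral_abs hxy
    _ ≤ ∫ s in a..b, |g s| :=
        intervalIntegral.integral_mono_interval hx.1 hxy hy.2
          (Filter.Eventually.of_forall fun _ => abs_nonneg _) hg.abs

theorem abs_intervalIntegral_sub_intervalIntegral_le {f g : ℝ → ℝ} {a m b : ℝ} (ham : a ≤ m)
    (hmb : m - a = b - m) (hg : IntervalIntegrable g volume a b)
    (hf : ∀ x ∈ Icc a b, ∀ y ∈ Icc a b, f y - f x = ∫ s in x..y, g s) :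
    |(∫ t in a..m, f t) - ∫ t in m..b, f t| ≤ (m - a) * ∫ t in a..b, |g t| := by
  set h := m - a
  have hcont := continuousOn_of_sub_eq_intervalIntegral hg hf
  have hleft : IntervalIntegrable f volume a m :=
    (hcont.mono (Icc_subset_Icc_right (by linarith))).intervalIntegrable_of_Icc ham
  have hright : IntervalIntegrable (fun t => f (t + h)) volume a m := by
    refine ContinuousOn.intervalIntegrable_of_Icc ham
      (hcont.comp (continuous_add_const h).continuousOn fun t ht => ?_)
    constructor <;> linarith [ht.1, ht.2]
  have hshift : ∫ t in m..b, f t = ∫ t in a..m, f (t + h) := by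
    rw [intervalIntegral.integral_comp_add_right]
    congr 1 <;> linarith
  have hbound : ∀ t ∈ uIoc a m, ‖f t - f (t + h)‖ ≤ ∫ s in a..b, |g s| := by
    intro t ht
    rw [uIoc_of_le ham] at ht
    rw [Real.norm_eq_abs, abs_sub_comm]
    exact abs_sub_le_intervalIntegral_abs hg hf ⟨ht.1.le, by linarith [ht.2]⟩
      ⟨by linarith [ht.1], by linarith [ht.2]⟩ (by linarith)
  rw [hshift, ← intervalIntegral.integral_sub hleft hright, ← Real.norm_eq_abs]
  refine (intervalIntegral.norm_integral_le_of_norm_le_const hbound).trans_eq ?_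
  rw [abs_of_nonneg (sub_nonneg.2 ham), mul_comm]

theorem Icc_mul_zpow_subset_Icc_zero_one {k j : ℕ} (hj : j < 2 ^ k) :
    Icc ((j : ℝ) * 2 ^ (-(k : ℤ))) ((j + 1 : ℝ) * 2 ^ (-(k : ℤ))) ⊆ Icc 0 1 := by
  have hj' : (j : ℝ) + 1 ≤ 2 ^ k := by exact_mod_cast hj
  have hunit : (2 : ℝ) ^ k * (2 : ℝ) ^ (-(k : ℤ)) = 1 := by
    rw [zpow_neg, zpow_natCast, mul_inv_cancel₀ (by positivity)]
  refine Icc_subset_Icc (by positivity) ?_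
  calc (j + 1 : ℝ) * 2 ^ (-(k : ℤ)) ≤ 2 ^ k * (2 : ℝ) ^ (-(k : ℤ)) := by gcongr
    _ = 1 := hunit

theorem intervalIntegral_mul_haar {f : ℝ → ℝ} {k j : ℕ} (hj : j < 2 ^ k)
    (hf : IntervalIntegrable f volume 0 1) :
    ∫ t in (0 : ℝ)..1, f t * haar k j t =
      (∫ t in (j : ℝ) * 2 ^ (-(k : ℤ))..(j + 1 / 2 : ℝ) * 2 ^ (-(k : ℤ)), f t) -
        ∫ t in (j + 1 / 2 : ℝ) * 2 ^ (-(k : ℤ))..(j + 1 : ℝ) * 2 ^ (-(k : ℤ)), f t := by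
  have hsub := Icc_mul_zpow_subset_Icc_zero_one hj
  simp only [haar_eq_indicator_sub_indicator, Pi.sub_apply, mul_sub]
  rw [intervalIntegral.integral_sub (hf.mul_indicator_one measurableSet_Ico)
      (hf.mul_indicator_one measurableSet_Ico),
    intervalIntegral_mul_indicator_one_Ico (by gcongr; norm_num)
      ((Icc_subset_Icc_right (by gcongr; norm_num)).trans hsub),
    intervalIntegral_mul_indicator_one_Ico (by gcongr; norm_num)
      ((Icc_subset_Icc_left (by gcongr; norm_num)).trans hsub)]

theorem haar_inner_bound_general (f f' : ℝ → ℝ) (k j : ℕ) (hj : j < 2 ^ k)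
    (hf'int : IntervalIntegrable f' volume 0 1)
    (hweak : ∀ t ∈ Set.Icc (0:ℝ) 1, f t = f 0 + ∫ s in (0:ℝ)..t, f' s) :
    |∫ t in (0:ℝ)..1, f t * haar k j t| ≤
      (2:ℝ) ^ (-(k:ℤ) - 1) *
        ∫ t in ((j:ℝ) * (2:ℝ) ^ (-(k:ℤ)))..(((j:ℝ) + 1) * (2:ℝ) ^ (-(k:ℤ))), |f' t| := by
  have hf'0 (x : ℝ) (hx : x ∈ Icc (0 : ℝ) 1) : IntervalIntegrable f' volume 0 x :=
    hf'int.mono_set (uIcc_subset_uIcc_left (by rwa [uIcc_of_le zero_le_one]))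
  have hprim : ∀ x ∈ Icc (0 : ℝ) 1, ∀ y ∈ Icc (0 : ℝ) 1, f y - f x = ∫ s in x..y, f' s := by
    intro x hx y hy
    rw [hweak x hx, hweak y hy, add_sub_add_left_eq_sub,
      intervalIntegral.integral_interval_sub_left (hf'0 y hy) (hf'0 x hx)]
  have hf : IntervalIntegrable f volume 0 1 :=
    (continuousOn_of_sub_eq_intervalIntegral hf'int hprim).intervalIntegrable_of_Icc zero_le_one
  have hsub := Icc_mul_zpow_subset_Icc_zero_one hj
  have hhalf : (2 : ℝ) ^ (-(k : ℤ) - 1) =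
      (j + 1 / 2 : ℝ) * 2 ^ (-(k : ℤ)) - (j : ℝ) * 2 ^ (-(k : ℤ)) := by
    rw [zpow_sub₀ two_ne_zero, zpow_one]
    ring
  rw [intervalIntegral_mul_haar hj hf, hhalf]
  refine abs_intervalIntegral_sub_intervalIntegral_le (by gcongr; norm_num) (by ring)
    (hf'int.mono_set ?_) fun x hx y hy => hprim x (hsub hx) y (hsub hy)
  rw [uIcc_of_le zero_le_one, uIcc_of_le (by gcongr; norm_num)]
  exact hsub

/-- If `f : [0,1] → ℝ` is of bounded variation with weak derivative `f'`, then
`|⟨f, b_{kj}⟩| ≤ 2^{-k-1} ∫_{j 2^{-k}}^{(j+1) 2^{-k}} |f'(t)| dt`. -/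
theorem haar_inner_bound (f f' : ℝ → ℝ) (k j : ℕ) (hj : j < 2 ^ k)
    (hBV : BoundedVariationOn f (Set.Icc (0:ℝ) 1))
    (hf'int : IntervalIntegrable f' volume 0 1)
    (hweak : ∀ t ∈ Set.Icc (0:ℝ) 1, f t = f 0 + ∫ s in (0:ℝ)..t, f' s) :
    |∫ t in (0:ℝ)..1, f t * haar k j t| ≤
      (2:ℝ) ^ (-(k:ℤ) - 1) *
        ∫ t in ((j:ℝ) * (2:ℝ) ^ (-(k:ℤ)))..(((j:ℝ) + 1) * (2:ℝ) ^ (-(k:ℤ))), |f' t| :=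
  haar_inner_bound_general f f' k j hj hf'int hweak
end

section
/- Let f : [0,1] → ℝ be in L²([0,1]) and of bounded variation with total variation ‖f‖_BV. Let F_N(f) denote the N-th partial sum of the Haar wavelet expansion of f, i.e. F_N(f) = ⟨f,1⟩ + Σ_{k=0}^{N} Σ_{j=0}^{2^k−1} ⟨f, b_{kj}⟩ b_{kj} / ‖b_{kj}‖²_{L²}. Then ‖f − F_N(f)‖_{L²} ≤ (1/2)(1/√2)^N ‖f‖_BV. -/
open MeasureTheory Set

/-- The `N`-th partial sum of the Haar wavelet expansion of `f`:
`F_N(f) = ⟨f,1⟩ + Σ_{k=0}^{N} Σ_{j=0}^{2^k-1} ⟨f, b_{kj}⟩ b_{kj} / ‖b_{kj}‖²`. -/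
noncomputable def haarPartialSum (N : ℕ) (f : ℝ → ℝ) (t : ℝ) : ℝ :=
  (∫ s in (0:ℝ)..1, f s) +
    ∑ k ∈ Finset.range (N + 1), ∑ j ∈ Finset.range (2 ^ k),
      (∫ s in (0:ℝ)..1, f s * haar k j s) * haar k j t /
        (∫ s in (0:ℝ)..1, (haar k j s) ^ 2)

/-!
On each dyadic interval of level `N + 1`, the partial sum `F_N(f)` is the mean of `f` over that
interval: the level-`k` Haar terms turn the mean over the level-`k` dyadic interval containing `t`
into the mean over the half of it containing `t`, so the sum over levels telescopes.
If `f` has variation `W` on an interval, its values lie in an interval of length `W`, so by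
Popoviciu's inequality its mean-square deviation from its mean there is at most `(W / 2) ^ 2`.
Summing over the `2 ^ (N + 1)` intervals and using `∑ Wᵢ² ≤ (∑ Wᵢ)² = ‖f‖_BV²` gives
`‖f - F_N(f)‖² ≤ 2 ^ (-(N + 1)) ‖f‖_BV² / 4`.
-/

noncomputable def dyadic (k m : ℕ) : ℝ := m / 2 ^ k

theorem dyadic_zero_right (k : ℕ) : dyadic k 0 = 0 := by simp [dyadic]

theorem dyadic_two_pow (k : ℕ) : dyadic k (2 ^ k) = 1 := by simp [dyadic]

theorem monotone_dyadic (k : ℕ) : Monotone (dyadic k) := fun m n h => by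
  unfold dyadic; gcongr

theorem dyadic_succ_sub (k m : ℕ) : dyadic k (m + 1) - dyadic k m = (2 ^ k)⁻¹ := by
  simp only [dyadic]; push_cast; ring

theorem dyadic_lt_succ (k m : ℕ) : dyadic k m < dyadic k (m + 1) :=
  sub_pos.1 (by rw [dyadic_succ_sub]; positivity)

theorem dyadic_succ_two_mul (k m : ℕ) : dyadic (k + 1) (2 * m) = dyadic k m := by
  simp only [dyadic]; push_cast; rw [pow_succ]; field_simp

theorem dyadic_mem_Icc {k m : ℕ} (hm : m ≤ 2 ^ k) : dyadic k m ∈ Icc 0 1 :=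
  ⟨by unfold dyadic; positivity, dyadic_two_pow k ▸ monotone_dyadic k hm⟩

theorem floor_eq_of_mem_dyadic {k m : ℕ} {t : ℝ}
    (ht : t ∈ Ico (dyadic k m) (dyadic k (m + 1))) : ⌊2 ^ k * t⌋₊ = m := by
  simp only [dyadic, mem_Ico, div_le_iff₀' (by positivity : (0:ℝ) < 2 ^ k),
    lt_div_iff₀' (by positivity : (0:ℝ) < 2 ^ k)] at ht
  rw [Nat.floor_eq_iff (by linarith [ht.1, (m.cast_nonneg : (0:ℝ) ≤ m)])]
  exact_mod_cast ht

theorem mem_Ico_dyadic_floor (k : ℕ) {t : ℝ} (ht : 0 ≤ t) :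
    t ∈ Ico (dyadic k ⌊2 ^ k * t⌋₊) (dyadic k (⌊2 ^ k * t⌋₊ + 1)) := by
  simp only [dyadic, mem_Ico, div_le_iff₀' (by positivity : (0:ℝ) < 2 ^ k),
    lt_div_iff₀' (by positivity : (0:ℝ) < 2 ^ k)]
  push_cast
  exact ⟨Nat.floor_le (by positivity), Nat.lt_floor_add_one _⟩

theorem two_pow_mul_sub_mem_Ico_iff {k j : ℕ} {t a b : ℝ} :
    2 ^ k * t - j ∈ Ico a b ↔ t ∈ Ico ((j + a) / 2 ^ k) ((j + b) / 2 ^ k) := by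
  simp only [mem_Ico, div_le_iff₀' (by positivity : (0:ℝ) < 2 ^ k),
    lt_div_iff₀' (by positivity : (0:ℝ) < 2 ^ k)]
  constructor <;> rintro ⟨h₁, h₂⟩ <;> constructor <;> linarith

theorem haarMother_eq (x : ℝ) :
    haarMother x = (Ico 0 (1 / 2)).indicator 1 x - (Ico (1 / 2) 1).indicator 1 x := by
  simp only [haarMother, indicator_apply, mem_Ico, Pi.one_apply]
  split_ifs <;> grind

theorem haarMother_sq (x : ℝ) : haarMother x ^ 2 = (Ico 0 1).indicator 1 x := by
  simp only [haarMother, indicator_apply, mem_Ico, Pi.one_apply]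
  split_ifs <;> grind

theorem haar_eq (k j : ℕ) (t : ℝ) :
    haar k j t = (Ico (dyadic (k + 1) (2 * j)) (dyadic (k + 1) (2 * j + 1))).indicator 1 t -
      (Ico (dyadic (k + 1) (2 * j + 1)) (dyadic (k + 1) (2 * j + 2))).indicator 1 t := by
  have hdyadic : ∀ n : ℕ, dyadic (k + 1) n = (j + (n - 2 * j : ℝ) / 2) / 2 ^ k := fun n => by
    simp only [dyadic, pow_succ]; ring
  simp only [haar, haarMother_eq, indicator_apply, two_pow_mul_sub_mem_Ico_iff, hdyadic,
    Pi.one_apply]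
  push_cast
  ring_nf

theorem haar_sq (k j : ℕ) (t : ℝ) :
    haar k j t ^ 2 = (Ico (dyadic k j) (dyadic k (j + 1))).indicator 1 t := by
  simp only [haar, haarMother_sq, indicator_apply, two_pow_mul_sub_mem_Ico_iff, dyadic,
    Pi.one_apply]
  push_cast
  ring_nf

theorem haar_eq_zero_of_notMem {k j : ℕ} {t : ℝ}
    (ht : t ∉ Ico (dyadic k j) (dyadic k (j + 1))) : haar k j t = 0 :=
  pow_eq_zero_iff two_ne_zero |>.1 <| (haar_sq k j t).trans (indicator_of_notMem ht _)

theorem intervalIntegral.integral_indicator_Ico {g : ℝ → ℝ} {a b c d : ℝ} (hca : c ≤ a)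
    (hab : a ≤ b) (hbd : b ≤ d) :
    ∫ x in c..d, (Ico a b).indicator g x = ∫ x in a..b, g x := by
  rw [intervalIntegral.integral_of_le (hca.trans (hab.trans hbd)),
    intervalIntegral.integral_of_le hab,
    MeasureTheory.integral_indicator measurableSet_Ico, Measure.restrict_restrict measurableSet_Ico]
  refine setIntegral_congr_set ?_
  have : Ioc a b ∩ Icc c d = Ioc a b :=
    inter_eq_left.2 (Ioc_subset_Icc_self.trans (Icc_subset_Icc hca hbd))
  exact this ▸ Ico_ae_eq_Ioc.inter Ioc_ae_eq_Icc

theorem interval_average_eq_add_div_two {f : ℝ → ℝ} {a b c : ℝ}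
    (hab : IntervalIntegrable f volume a b) (hbc : IntervalIntegrable f volume b c)
    (h : b - a = c - b) :
    ⨍ x in a..c, f x = ((⨍ x in a..b, f x) + ⨍ x in b..c, f x) / 2 := by
  rw [interval_average_eq_div, interval_average_eq_div, interval_average_eq_div,
    ← intervalIntegral.integral_add_adjacent_intervals hab hbc,
    show c - a = 2 * (b - a) by linarith, ← h, ← div_div]
  ring

theorem IntervalIntegrable.mono_dyadic {f : ℝ → ℝ} (hf : IntervalIntegrable f volume 0 1)
    {k m n : ℕ} (hm : m ≤ 2 ^ k) (hn : n ≤ 2 ^ k) :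
    IntervalIntegrable f volume (dyadic k m) (dyadic k n) :=
  hf.mono_set (uIcc_subset_uIcc (Icc_subset_uIcc (dyadic_mem_Icc hm))
    (Icc_subset_uIcc (dyadic_mem_Icc hn)))

theorem integral_mul_haar {f : ℝ → ℝ} (hf : IntervalIntegrable f volume 0 1) {k j : ℕ}
    (hj : j < 2 ^ k) :
    ∫ s in (0:ℝ)..1, f s * haar k j s =
      (∫ s in dyadic (k + 1) (2 * j)..dyadic (k + 1) (2 * j + 1), f s) -
        ∫ s in dyadic (k + 1) (2 * j + 1)..dyadic (k + 1) (2 * j + 2), f s := by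
  have hj' : 2 * j + 2 ≤ 2 ^ (k + 1) := by rw [pow_succ]; omega
  have h₀ := (dyadic_mem_Icc (k := k + 1) (m := 2 * j) (by omega)).1
  have h₁ := monotone_dyadic (k + 1) (Nat.le_succ (2 * j))
  have h₂ := monotone_dyadic (k + 1) (Nat.le_succ (2 * j + 1))
  have h₃ := (dyadic_mem_Icc hj').2
  simp_rw [haar_eq, mul_sub, ← indicator_mul_right, Pi.one_apply, mul_one]
  have hind : ∀ a b : ℝ, IntervalIntegrable ((Ico a b).indicator f) volume 0 1 := fun a b =>
    (intervalIntegrable_iff_integrableOn_Ioc_of_le zero_le_one).2 (hf.1.indicator measurableSet_Ico)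
  rw [intervalIntegral.integral_sub (hind _ _) (hind _ _),
    intervalIntegral.integral_indicator_Ico h₀ h₁ (h₂.trans h₃),
    intervalIntegral.integral_indicator_Ico (h₀.trans h₁) h₂ h₃]

theorem integral_haar_sq {k j : ℕ} (hj : j < 2 ^ k) :
    ∫ s in (0:ℝ)..1, haar k j s ^ 2 = (2 ^ k)⁻¹ := by
  simp_rw [haar_sq]
  rw [intervalIntegral.integral_indicator_Ico (dyadic_mem_Icc hj.le).1
    (monotone_dyadic k (Nat.le_succ j)) (dyadic_mem_Icc hj).2]
  simp [dyadic_succ_sub]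

theorem integral_mul_haar_div_integral_haar_sq {f : ℝ → ℝ}
    (hf : IntervalIntegrable f volume 0 1) {k j : ℕ} (hj : j < 2 ^ k) :
    (∫ s in (0:ℝ)..1, f s * haar k j s) / ∫ s in (0:ℝ)..1, haar k j s ^ 2 =
      ((⨍ s in dyadic (k + 1) (2 * j)..dyadic (k + 1) (2 * j + 1), f s) -
        ⨍ s in dyadic (k + 1) (2 * j + 1)..dyadic (k + 1) (2 * j + 2), f s) / 2 := by
  rw [integral_mul_haar hf hj, integral_haar_sq hj, interval_average_eq_div,
    interval_average_eq_div, dyadic_succ_sub, dyadic_succ_sub, pow_succ]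
  ring

theorem interval_average_dyadic_eq_add_div_two {f : ℝ → ℝ}
    (hf : IntervalIntegrable f volume 0 1) {k q : ℕ} (hq : q < 2 ^ k) :
    ⨍ s in dyadic k q..dyadic k (q + 1), f s =
      ((⨍ s in dyadic (k + 1) (2 * q)..dyadic (k + 1) (2 * q + 1), f s) +
        ⨍ s in dyadic (k + 1) (2 * q + 1)..dyadic (k + 1) (2 * q + 2), f s) / 2 := by
  have hq' : 2 * q + 2 ≤ 2 ^ (k + 1) := by rw [pow_succ]; omega
  rw [← dyadic_succ_two_mul, ← dyadic_succ_two_mul k (q + 1), mul_add_one]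
  exact interval_average_eq_add_div_two (hf.mono_dyadic (by omega) (by omega))
    (hf.mono_dyadic (by omega) hq') (by rw [dyadic_succ_sub, dyadic_succ_sub])

noncomputable def dyadicAverage (f : ℝ → ℝ) (k : ℕ) (t : ℝ) : ℝ :=
  ⨍ s in dyadic k ⌊2 ^ k * t⌋₊..dyadic k (⌊2 ^ k * t⌋₊ + 1), f s

theorem dyadicAverage_of_mem {f : ℝ → ℝ} {k m : ℕ} {t : ℝ}
    (ht : t ∈ Ico (dyadic k m) (dyadic k (m + 1))) :
    dyadicAverage f k t = ⨍ s in dyadic k m..dyadic k (m + 1), f s := by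
  rw [dyadicAverage, floor_eq_of_mem_dyadic ht]

theorem dyadicAverage_zero {f : ℝ → ℝ} {t : ℝ} (ht : t ∈ Ico 0 1) :
    dyadicAverage f 0 t = ∫ s in (0:ℝ)..1, f s := by
  rw [dyadicAverage_of_mem (m := 0) (by simpa [dyadic] using ht), interval_average_eq]
  simp [dyadic]

theorem sum_haar_terms_eq_dyadicAverage_sub {f : ℝ → ℝ} (hf : IntervalIntegrable f volume 0 1)
    {t : ℝ} (ht : t ∈ Ico 0 1) (k : ℕ) :
    ∑ j ∈ Finset.range (2 ^ k),
        (∫ s in (0:ℝ)..1, f s * haar k j s) * haar k j t / ∫ s in (0:ℝ)..1, haar k j s ^ 2 =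
      dyadicAverage f (k + 1) t - dyadicAverage f k t := by
  set q := ⌊2 ^ k * t⌋₊
  have htq := mem_Ico_dyadic_floor k ht.1
  have hq : q < 2 ^ k := by
    rw [Nat.floor_lt (by positivity [ht.1])]
    push_cast
    nlinarith [ht.2, pow_pos (two_pos : (0:ℝ) < 2) k]
  -- only the wavelet supported on the level-`k` dyadic interval containing `t` is nonzero at `t`
  rw [Finset.sum_eq_single_of_mem q (Finset.mem_range.2 hq) fun j _ hj => by
    rw [haar_eq_zero_of_notMem (mt floor_eq_of_mem_dyadic (Ne.symm hj)), mul_zero,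
      zero_div], mul_div_right_comm, integral_mul_haar_div_integral_haar_sq hf hq]
  have hhalves : t ∈ Ico (dyadic (k + 1) (2 * q)) (dyadic (k + 1) (2 * q + 2)) := by
    rwa [dyadic_succ_two_mul, ← mul_add_one, dyadic_succ_two_mul]
  rw [dyadicAverage_of_mem htq, interval_average_dyadic_eq_add_div_two hf hq, haar_eq]
  rcases lt_or_ge t (dyadic (k + 1) (2 * q + 1)) with hleft | hright
  · have hL : t ∈ Ico (dyadic (k + 1) (2 * q)) (dyadic (k + 1) (2 * q + 1)) := ⟨hhalves.1, hleft⟩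
    rw [dyadicAverage_of_mem hL, indicator_of_mem hL,
      indicator_of_notMem fun h => (not_le.2 hleft) h.1]
    simp only [Pi.one_apply]
    ring
  · have hR : t ∈ Ico (dyadic (k + 1) (2 * q + 1)) (dyadic (k + 1) (2 * q + 2)) :=
      ⟨hright, hhalves.2⟩
    rw [dyadicAverage_of_mem hR, indicator_of_mem hR,
      indicator_of_notMem fun h => (not_le.2 h.2) hright]
    simp only [Pi.one_apply]
    ring

theorem haarPartialSum_eq_dyadicAverage {f : ℝ → ℝ} (hf : IntervalIntegrable f volume 0 1)
    (N : ℕ) {t : ℝ} (ht : t ∈ Ico 0 1) :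
    haarPartialSum N f t = dyadicAverage f (N + 1) t := by
  rw [haarPartialSum, Finset.sum_congr rfl fun k _ => sum_haar_terms_eq_dyadicAverage_sub hf ht k,
    Finset.sum_range_sub (dyadicAverage f · t), dyadicAverage_zero ht, add_sub_cancel]

theorem average_sq_sub_average_le {α : Type*} [MeasurableSpace α] {μ : Measure α}
    [IsFiniteMeasure μ] [NeZero μ] {f : α → ℝ} {L M : ℝ} (hf : AEMeasurable f μ)
    (hfLM : ∀ᵐ x ∂μ, f x ∈ Icc L M) :
    ⨍ x, (f x - ⨍ y, f y ∂μ) ^ 2 ∂μ ≤ ((M - L) / 2) ^ 2 := by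
  rw [average_eq', average_eq', ← ProbabilityTheory.variance_eq_integral (hf.smul_measure _)]
  exact ProbabilityTheory.variance_le_sq_of_bounded (Measure.ae_smul_measure hfLM _)
    (hf.smul_measure _)

theorem BoundedVariationOn.intervalIntegrable {f : ℝ → ℝ} {a b : ℝ}
    (hf : BoundedVariationOn f (uIcc a b)) : IntervalIntegrable f volume a b := by
  obtain ⟨p, q, hp, hq, rfl⟩ := hf.locallyBoundedVariationOn.exists_monotoneOn_sub_monotoneOn
  exact hp.intervalIntegrable.sub hq.intervalIntegrable

theorem BoundedVariationOn.intervalIntegrable_sq_sub {f : ℝ → ℝ} {a b : ℝ}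
    (hf : BoundedVariationOn f (uIcc a b)) (c : ℝ) :
    IntervalIntegrable (fun x => (f x - c) ^ 2) volume a b := by
  have hfc : BoundedVariationOn (fun x => f x - c) (uIcc a b) :=
    (IsometryEquiv.subRight c).isometry.lipschitz.comp_boundedVariationOn hf
  simpa only [sq, Pi.mul_def] using (hfc.mul hfc).intervalIntegrable

theorem BoundedVariationOn.exists_mapsTo_Icc {α : Type*} [LinearOrder α] {f : α → ℝ}
    {s : Set α} (hf : BoundedVariationOn f s) (hs : s.Nonempty) :
    ∃ L, MapsTo f s (Icc L (L + (eVariationOn f s).toReal)) := by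
  obtain ⟨x₀, hx₀⟩ := hs
  have hbdd : BddBelow (f '' s) :=
    ⟨f x₀ - (eVariationOn f s).toReal, by
      rintro _ ⟨y, hy, rfl⟩; linarith [hf.sub_le hx₀ hy]⟩
  refine ⟨sInf (f '' s), fun x hx => ⟨csInf_le hbdd (mem_image_of_mem f hx), ?_⟩⟩
  have : f x - (eVariationOn f s).toReal ≤ sInf (f '' s) :=
    le_csInf ⟨f x₀, mem_image_of_mem f hx₀⟩ (by
      rintro _ ⟨y, hy, rfl⟩; linarith [hf.sub_le hx hy])
  linarith

theorem BoundedVariationOn.integral_sq_sub_average_le {f : ℝ → ℝ} {a b : ℝ} (hab : a < b)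
    (hf : BoundedVariationOn f (Icc a b)) :
    ∫ x in a..b, (f x - ⨍ y in a..b, f y) ^ 2 ≤
      (b - a) * ((eVariationOn f (Icc a b)).toReal / 2) ^ 2 := by
  obtain ⟨L, hL⟩ := hf.exists_mapsTo_Icc (nonempty_Icc.2 hab.le)
  have hf' : BoundedVariationOn f (uIcc a b) := by rwa [uIcc_of_le hab.le]
  have : NeZero (volume.restrict (Ioc a b)) := ⟨by simp [hab]⟩
  have hmean := average_sq_sub_average_le hf'.intervalIntegrable.1.aemeasurable
    ((ae_restrict_iff' measurableSet_Ioc).2 (ae_of_all _ fun x hx => hL (Ioc_subset_Icc_self hx)))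
  rw [add_sub_cancel_left, ← uIoc_of_le hab.le] at hmean
  calc ∫ x in a..b, (f x - ⨍ y in a..b, f y) ^ 2
      = (b - a) * ⨍ x in a..b, (f x - ⨍ y in a..b, f y) ^ 2 := by
        rw [interval_average_eq (fun x => (f x - ⨍ y in a..b, f y) ^ 2), smul_eq_mul,
          mul_inv_cancel_left₀ (sub_pos.2 hab).ne']
    _ ≤ _ := by gcongr

theorem BoundedVariationOn.mono_dyadic {f : ℝ → ℝ} (hf : BoundedVariationOn f (Icc 0 1))
    {k i : ℕ} (hi : i < 2 ^ k) : BoundedVariationOn f (Icc (dyadic k i) (dyadic k (i + 1))) :=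
  hf.mono (Icc_subset_Icc (dyadic_mem_Icc hi.le).1 (dyadic_mem_Icc hi).2)

theorem sum_eVariationOn_dyadic {f : ℝ → ℝ} (hf : BoundedVariationOn f (Icc 0 1)) (k : ℕ) :
    ∑ i ∈ Finset.range (2 ^ k), (eVariationOn f (Icc (dyadic k i) (dyadic k (i + 1)))).toReal =
      (eVariationOn f (Icc 0 1)).toReal := by
  rw [← ENNReal.toReal_sum fun i hi => hf.mono_dyadic (Finset.mem_range.1 hi)]
  have := eVariationOn.sum f (s := univ) (monotone_dyadic k) (n := 2 ^ k) fun _ _ _ => mem_univ _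
  simp only [univ_inter, dyadic_zero_right, dyadic_two_pow] at this
  rw [this]

theorem integral_sq_sub_dyadicAverage_eq_sum {f : ℝ → ℝ} (hf : BoundedVariationOn f (Icc 0 1))
    (k : ℕ) :
    ∫ t in (0:ℝ)..1, (f t - dyadicAverage f k t) ^ 2 =
      ∑ i ∈ Finset.range (2 ^ k), ∫ t in dyadic k i..dyadic k (i + 1),
        (f t - ⨍ s in dyadic k i..dyadic k (i + 1), f s) ^ 2 := by
  have hpiece : ∀ i, EqOn (fun t => (f t - dyadicAverage f k t) ^ 2)
      (fun t => (f t - ⨍ s in dyadic k i..dyadic k (i + 1), f s) ^ 2)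
      (uIoo (dyadic k i) (dyadic k (i + 1))) := fun i t ht => by
    rw [uIoo_of_le (dyadic_lt_succ k i).le] at ht
    simp only [dyadicAverage_of_mem (Ioo_subset_Ico_self ht)]
  have hint : ∀ i < 2 ^ k, IntervalIntegrable (fun t => (f t - dyadicAverage f k t) ^ 2) volume
      (dyadic k i) (dyadic k (i + 1)) := fun i hi =>
    (BoundedVariationOn.intervalIntegrable_sq_sub
      (by rw [uIcc_of_le (dyadic_lt_succ k i).le]; exact hf.mono_dyadic hi) _).congr_uIoo
      (hpiece i).symm
  conv_lhs => rw [← dyadic_zero_right k, ← dyadic_two_pow k]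
  rw [← intervalIntegral.sum_integral_adjacent_intervals hint]
  exact Finset.sum_congr rfl fun i _ => intervalIntegral.integral_congr_uIoo (hpiece i)

theorem integral_sq_sub_dyadicAverage_le {f : ℝ → ℝ} (hf : BoundedVariationOn f (Icc 0 1))
    (k : ℕ) :
    ∫ t in (0:ℝ)..1, (f t - dyadicAverage f k t) ^ 2 ≤
      (2 ^ k)⁻¹ * ((eVariationOn f (Icc 0 1)).toReal / 2) ^ 2 := by
  set W : ℕ → ℝ := fun i => (eVariationOn f (Icc (dyadic k i) (dyadic k (i + 1)))).toReal
  rw [integral_sq_sub_dyadicAverage_eq_sum hf, ← sum_eVariationOn_dyadic hf k]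
  calc _ ≤ ∑ i ∈ Finset.range (2 ^ k), (2 ^ k)⁻¹ * (W i / 2) ^ 2 :=
        Finset.sum_le_sum fun i hi => by
          simpa only [dyadic_succ_sub] using
            (hf.mono_dyadic (Finset.mem_range.1 hi)).integral_sq_sub_average_le
              (dyadic_lt_succ k i)
    _ = (2 ^ k)⁻¹ / 4 * ∑ i ∈ Finset.range (2 ^ k), W i ^ 2 := by
        rw [Finset.mul_sum]; congr! 1 with i; ring
    _ ≤ (2 ^ k)⁻¹ / 4 * (∑ i ∈ Finset.range (2 ^ k), W i) ^ 2 := by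
        gcongr; exact Finset.sum_sq_le_sq_sum_of_nonneg fun i _ => ENNReal.toReal_nonneg
    _ = _ := by ring

theorem haar_partial_sum_error_general (f : ℝ → ℝ) (N : ℕ)
    (hBV : BoundedVariationOn f (Set.Icc (0:ℝ) 1)) :
    Real.sqrt (∫ t in (0:ℝ)..1, (f t - haarPartialSum N f t) ^ 2) ≤
      (1 / 2) * (1 / Real.sqrt 2) ^ N * (eVariationOn f (Set.Icc (0:ℝ) 1)).toReal := by
  have hf : IntervalIntegrable f volume 0 1 :=
    BoundedVariationOn.intervalIntegrable (by rwa [uIcc_of_le zero_le_one])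
  have hpartial : ∫ t in (0:ℝ)..1, (f t - haarPartialSum N f t) ^ 2 =
      ∫ t in (0:ℝ)..1, (f t - dyadicAverage f (N + 1) t) ^ 2 :=
    intervalIntegral.integral_congr_uIoo fun t ht => by
      rw [uIoo_of_le zero_le_one] at ht
      simp only [haarPartialSum_eq_dyadicAverage hf N (Ioo_subset_Ico_self ht)]
  have hsqrt : ((1 / Real.sqrt 2) ^ N) ^ 2 = (2 ^ N)⁻¹ := by
    rw [← pow_mul, mul_comm, pow_mul, div_pow, Real.sq_sqrt zero_le_two, one_pow, one_div,
      inv_pow]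
  rw [hpartial, Real.sqrt_le_iff]
  refine ⟨by positivity, (integral_sq_sub_dyadicAverage_le hBV (N + 1)).trans ?_⟩
  set V := (eVariationOn f (Icc (0:ℝ) 1)).toReal
  rw [mul_pow, mul_pow, hsqrt]
  calc ((2:ℝ) ^ (N + 1))⁻¹ * (V / 2) ^ 2 = (1 / 2) ^ 2 * (2 ^ N)⁻¹ * V ^ 2 / 2 := by ring
    _ ≤ _ := half_le_self (by positivity)

/-- If `f ∈ L²([0,1])` is of bounded variation, then
`‖f - F_N(f)‖_{L²} ≤ (1/2)(1/√2)^N ‖f‖_BV`. -/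
theorem haar_partial_sum_error (f : ℝ → ℝ) (N : ℕ)
    (hmeas : Measurable f)
    (hL2 : IntervalIntegrable (fun t => (f t) ^ 2) volume 0 1)
    (hBV : BoundedVariationOn f (Set.Icc (0:ℝ) 1)) :
    Real.sqrt (∫ t in (0:ℝ)..1, (f t - haarPartialSum N f t) ^ 2) ≤
      (1 / 2) * (1 / Real.sqrt 2) ^ N * (eVariationOn f (Set.Icc (0:ℝ) 1)).toReal :=
  haar_partial_sum_error_general f N hBV
end

section
/- Let (S, dist) be a metric space and J : S → [α, ∞) a lower-bounded function. Let θ : S → (−∞, 0] be an optimality function and Γ : S → S a map with the uniform sufficient descent property: for every ε > 0 there exists δ_ε > 0 such that θ(x) < −ε implies J(Γ(x)) − J(x) ≤ −δ_ε. Suppose additionally J(Γ(x)) ≤ J(x) for all x. Let {x_j} be the sequence given by x_{j+1} = Γ(x_j) if θ(x_j) < 0 and x_{j+1} = x_j if θ(x_j) = 0. Then lim_{j→∞} θ(x_j) = 0. -/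
open Filter

/-- Uniform sufficient descent implies convergence of the optimality function to zero:
if `J` is lower bounded, `θ ≤ 0`, `Γ` has the uniform sufficient descent property with
respect to `θ`, `J(Γ(x)) ≤ J(x)` for all `x`, and `x_{j+1} = Γ(x_j)` when `θ(x_j) < 0`
(and `x_{j+1} = x_j` when `θ(x_j) = 0`), then `lim_{j→∞} θ(x_j) = 0`. -/
theorem uniform_sufficient_descent_convergence {S : Type*} [MetricSpace S]
    (J : S → ℝ) (α : ℝ) (hJlb : ∀ x, α ≤ J x)
    (θ : S → ℝ) (hθ : ∀ x, θ x ≤ 0)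
    (Γ : S → S)
    (hdescent : ∀ ε > (0:ℝ), ∃ δ > (0:ℝ), ∀ x, θ x < -ε → J (Γ x) - J x ≤ -δ)
    (hmono : ∀ x, J (Γ x) ≤ J x)
    (x : ℕ → S)
    (hseq : ∀ j, (θ (x j) < 0 → x (j + 1) = Γ (x j)) ∧ (θ (x j) = 0 → x (j + 1) = x j)) :
    Tendsto (fun j => θ (x j)) atTop (nhds 0) := by
  -- J along the sequence is antitone
  have hstep : ∀ n, J (x (n + 1)) ≤ J (x n) := by
    intro n
    rcases lt_or_eq_of_le (hθ (x n)) with h | h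
    · rw [(hseq n).1 h]; exact hmono _
    · rw [(hseq n).2 h]
  have hanti : Antitone (fun n => J (x n)) := antitone_nat_of_succ_le hstep
  rw [Metric.tendsto_atTop]
  intro ε hε
  by_contra hcon
  push_neg at hcon
  -- frequently θ (x j) ≤ -ε
  have hfreq : ∀ N, ∃ j ≥ N, θ (x j) ≤ -ε := by
    intro N
    obtain ⟨j, hj, hdist⟩ := hcon N
    refine ⟨j, hj, ?_⟩
    rw [Real.dist_eq, sub_zero, abs_of_nonpos (hθ _)] at hdist
    linarith
  obtain ⟨δ, hδ, hdesc⟩ := hdescent (ε / 2) (by linarith)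
  -- a bad index gives a drop of δ
  have hdrop : ∀ n, θ (x n) ≤ -ε → J (x (n + 1)) ≤ J (x n) - δ := by
    intro n hn
    have hlt : θ (x n) < -(ε / 2) := by linarith
    rw [(hseq n).1 (by linarith)]
    have := hdesc (x n) hlt
    linarith
  -- build a sequence of bad indices
  choose f hf hfbad using hfreq
  let g : ℕ → ℕ := fun k => Nat.rec (f 0) (fun _ m => f (m + 1)) k
  have hg0 : g 0 = f 0 := rfl
  have hgs : ∀ k, g (k + 1) = f (g k + 1) := fun k => rfl
  have hgbad : ∀ k, θ (x (g k)) ≤ -ε := by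
    intro k; cases k with
    | zero => exact hfbad 0
    | succ k => rw [hgs]; exact hfbad _
  have hgmono : ∀ k, g k + 1 ≤ g (k + 1) := by
    intro k; rw [hgs]; exact hf (g k + 1)
  have key : ∀ k, J (x (g k + 1)) ≤ J (x 0) - (k + 1) * δ := by
    intro k
    induction k with
    | zero =>
      have h1 := hdrop (g 0) (hgbad 0)
      have h2 : J (x (g 0)) ≤ J (x 0) := hanti (Nat.zero_le _)
      push_cast
      linarith
    | succ k ih =>
      have h1 := hdrop (g (k + 1)) (hgbad (k + 1))
      have h2 : J (x (g (k + 1))) ≤ J (x (g k + 1)) := hanti (hgmono k)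
      push_cast at ih ⊢
      linarith
  obtain ⟨k, hk⟩ := exists_nat_gt ((J (x 0) - α) / δ)
  have h1 := key k
  have h2 := hJlb (x (g k + 1))
  have h3 : (J (x 0) - α) / δ < k + 1 := by linarith
  rw [div_lt_iff₀ hδ] at h3
  linarith
end

section
/- Let τ = (τ_0,…,τ_m) be a partition of [0,1] with 0 = τ_0 ≤ … ≤ τ_m = 1 and τ_{k+1} − τ_k ≤ 2^{−N} for all k. Let z be defined by the forward Euler scheme z(τ_{k+1}) = z(τ_k) + (τ_{k+1} − τ_k) f(τ_k, z(τ_k), u(τ_k), d(τ_k)), z(0) = x₀, extended to [0,1] by linear interpolation, and let x be the exact solution of ẋ = f(t, x, u, d), x(0) = x₀, where the relaxed vector field f is Lipschitz with constant L in all arguments and bounded by C along the relevant trajectories, and u, d are piecewise constant on the partition. Then there exists B > 0 depending only on L and C (one may take B = (1+C) L e^L) such that ‖z(t) − x(t)‖₂ ≤ B · 2^{−N} for all t ∈ [0,1]. -/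
open MeasureTheory Set

/-- Pasting lemma: a function continuous on two closed sets is continuous on their union. -/
lemma continuousOn_union_of_isClosed' {X Y : Type*} [TopologicalSpace X] [TopologicalSpace Y]
    {f : X → Y} {s t : Set X} (hs : IsClosed s) (ht : IsClosed t)
    (hfs : ContinuousOn f s) (hft : ContinuousOn f t) : ContinuousOn f (s ∪ t) := by
  intro x hx
  have Hs : ContinuousWithinAt f s x := by
    by_cases h : x ∈ s
    · exact hfs x h
    · exact continuousWithinAt_of_notMem_closure (by rwa [hs.closure_eq])
  have Ht : ContinuousWithinAt f t x := by
    by_cases h : x ∈ t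
    · exact hft x h
    · exact continuousWithinAt_of_notMem_closure (by rwa [ht.closure_eq])
  exact Hs.union Ht

/-- Convergence of the forward Euler scheme with linear interpolation: if the relaxed
vector field is `L`-Lipschitz in all arguments and bounded by `C`, the inputs are
piecewise constant on a partition of mesh at most `2^{-N}`, `z` is the linear
interpolation of the Euler iterates and `x` the exact solution, then
`‖z(t) - x(t)‖ ≤ (1+C) L e^L 2^{-N}` for all `t ∈ [0,1]`. -/
theorem euler_scheme_error (n m q N mP : ℕ) (L C : ℝ) (hL : 0 < L) (hC : 0 < C)
    (f : ℝ → EuclideanSpace ℝ (Fin n) → EuclideanSpace ℝ (Fin m) →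
      EuclideanSpace ℝ (Fin q) → EuclideanSpace ℝ (Fin n))
    (hLip : ∀ (t₁ t₂ : ℝ) x₁ x₂ u₁ u₂ d₁ d₂,
      ‖f t₁ x₁ u₁ d₁ - f t₂ x₂ u₂ d₂‖ ≤
        L * (|t₁ - t₂| + ‖x₁ - x₂‖ + ‖u₁ - u₂‖ + ‖d₁ - d₂‖))
    (hbd : ∀ (t : ℝ) x u d, ‖f t x u d‖ ≤ C)
    (τ : ℕ → ℝ) (hτ0 : τ 0 = 0) (hτm : τ mP = 1)
    (hmono : ∀ k < mP, τ k ≤ τ (k + 1))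
    (hmesh : ∀ k < mP, τ (k + 1) - τ k ≤ (2:ℝ) ^ (-(N:ℤ)))
    (u : ℝ → EuclideanSpace ℝ (Fin m)) (d : ℝ → EuclideanSpace ℝ (Fin q))
    (hpc : ∀ k < mP, ∀ t ∈ Set.Ico (τ k) (τ (k + 1)), u t = u (τ k) ∧ d t = d (τ k))
    (x₀ : EuclideanSpace ℝ (Fin n))
    (zg : ℕ → EuclideanSpace ℝ (Fin n)) (hzg0 : zg 0 = x₀)
    (hzgrec : ∀ k < mP,
      zg (k + 1) = zg k + (τ (k + 1) - τ k) • f (τ k) (zg k) (u (τ k)) (d (τ k)))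
    (z : ℝ → EuclideanSpace ℝ (Fin n))
    (hzinterp : ∀ k < mP, ∀ t ∈ Set.Ico (τ k) (τ (k + 1)),
      z t = zg k + ((t - τ k) / (τ (k + 1) - τ k)) • (zg (k + 1) - zg k))
    (hz1 : z 1 = zg mP)
    (x : ℝ → EuclideanSpace ℝ (Fin n)) (hx0 : x 0 = x₀)
    (hx : ∀ t ∈ Set.Icc (0:ℝ) 1, HasDerivAt x (f t (x t) (u t) (d t)) t) :
    ∀ t ∈ Set.Icc (0:ℝ) 1,
      ‖z t - x t‖ ≤ (1 + C) * L * Real.exp L * (2:ℝ) ^ (-(N:ℤ)) := by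
  classical
  have h2N : (0:ℝ) < (2:ℝ) ^ (-(N:ℤ)) := by positivity
  have hm0 : 0 < mP := by
    rcases Nat.eq_zero_or_pos mP with h | h
    · exfalso; rw [h, hτ0] at hτm; norm_num at hτm
    · exact h
  -- monotonicity of the partition
  have hmono' : ∀ k, k ≤ mP → ∀ j, j ≤ k → τ j ≤ τ k := by
    intro k
    induction k with
    | zero => intro _ j hj; rw [Nat.le_zero.mp hj]
    | succ k ih =>
      intro hk j hj
      rcases Nat.lt_or_ge j (k + 1) with h | h
      · exact le_trans (ih (by omega) j (by omega)) (hmono k (by omega))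
      · rw [le_antisymm hj h]
  have hτ_nonneg : ∀ k, k ≤ mP → 0 ≤ τ k := by
    intro k hk
    have := hmono' k hk 0 (Nat.zero_le k); rwa [hτ0] at this
  have hτ_le_one : ∀ k, k ≤ mP → τ k ≤ 1 := by
    intro k hk
    have := hmono' mP le_rfl k hk; rwa [hτm] at this
  -- on collapsed runs of the partition, the Euler iterates agree
  have hzg_collapse : ∀ k, k ≤ mP → ∀ j, j ≤ k → τ j = τ k → zg j = zg k := by
    intro k
    induction k with
    | zero => intro _ j hj _; rw [Nat.le_zero.mp hj]
    | succ k ih =>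
      intro hk j hj heq
      rcases Nat.lt_or_ge j (k + 1) with h | h
      · have h1 : τ j ≤ τ k := hmono' k (by omega) j (by omega)
        have h2 : τ k ≤ τ (k + 1) := hmono k (by omega)
        have hjk : τ j = τ k := le_antisymm h1 (by rw [← heq] at h2; exact h2)
        have hz : zg j = zg k := ih (by omega) j (by omega) hjk
        have hΔ : τ (k + 1) - τ k = 0 := by rw [← heq, hjk]; ring
        rw [hz, hzgrec k (by omega), hΔ, zero_smul, add_zero]
      · rw [le_antisymm hj h]
  -- covering of [0,1) by the partition intervals
  have hcover : ∀ t : ℝ, 0 ≤ t → t < 1 → ∃ k, k < mP ∧ τ k ≤ t ∧ t < τ (k + 1) := by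
    intro t ht0 ht1
    set P : ℕ → Prop := fun k => τ k ≤ t with hP
    have hP0 : P 0 := by simp only [hP, hτ0]; exact ht0
    set k := Nat.findGreatest P mP with hkdef
    have hkle : k ≤ mP := Nat.findGreatest_le mP
    have hPk : P k := Nat.findGreatest_spec (Nat.zero_le mP) hP0
    have hkm : k < mP := by
      rcases eq_or_lt_of_le hkle with h | h
      · exfalso
        have : τ mP ≤ t := by rw [← h]; exact hPk
        rw [hτm] at this; linarith
      · exact h
    have hnot : ¬ P (k + 1) :=
      Nat.findGreatest_is_greatest (Nat.lt_succ_self k) (by omega)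
    exact ⟨k, hkm, hPk, not_le.mp hnot⟩
  -- values of z at the partition points
  have hzval : ∀ k, k ≤ mP → z (τ k) = zg k := by
    intro k hk
    rcases eq_or_lt_of_le (hτ_le_one k hk) with h1 | h1
    · rw [h1, hz1]
      exact (hzg_collapse mP le_rfl k hk (by rw [h1, hτm])).symm
    · obtain ⟨j, hjm, hj1, hj2⟩ := hcover (τ k) (hτ_nonneg k hk) h1
      have hkj : k ≤ j := by
        by_contra h
        push_neg at h
        have : τ (j + 1) ≤ τ k := hmono' k hk (j + 1) (by omega)
        linarith
      have heq : τ j = τ k := le_antisymm hj1 (hmono' j hjm.le k hkj)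
      rw [hzinterp j hjm (τ k) ⟨hj1, hj2⟩, ← heq, sub_self, zero_div, zero_smul, add_zero]
      exact (hzg_collapse j hjm.le k hkj heq.symm).symm
  -- size of the Euler increments
  have hstep : ∀ k, k < mP → ‖zg (k + 1) - zg k‖ ≤ C * (τ (k + 1) - τ k) := by
    intro k hk
    rw [hzgrec k hk, add_sub_cancel_left, norm_smul, Real.norm_eq_abs,
      abs_of_nonneg (by linarith [hmono k hk])]
    exact mul_le_mul_of_nonneg_left (hbd _ _ _ _) (by linarith [hmono k hk]) |>.trans
      (le_of_eq (mul_comm _ _))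
  -- continuity of z on each partition interval
  have hpiece : ∀ k, k < mP → ContinuousOn z (Icc (τ k) (τ (k + 1))) := by
    intro k hk
    rcases eq_or_lt_of_le (hmono k hk) with h | h
    · rw [← h, Icc_self]; exact continuousOn_singleton z (τ k)
    · have hcont : ContinuousOn
          (fun t => zg k + ((t - τ k) / (τ (k + 1) - τ k)) • (zg (k + 1) - zg k))
          (Icc (τ k) (τ (k + 1))) := by
        apply Continuous.continuousOn
        exact continuous_const.add
          (((continuous_id.sub continuous_const).div_const _).smul continuous_const)
      apply hcont.congr
      intro t ht
      show z t = zg k + ((t - τ k) / (τ (k + 1) - τ k)) • (zg (k + 1) - zg k)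
      rcases eq_or_lt_of_le ht.2 with h2 | h2
      · have hΔ : τ (k + 1) - τ k ≠ 0 := by linarith
        rw [h2, hzval (k + 1) (by omega), div_self hΔ, one_smul]
        abel
      · exact hzinterp k hk t ⟨ht.1, h2⟩
  -- continuity of z on [0,1]
  have hzcont : ContinuousOn z (Icc 0 1) := by
    have H : ∀ k, k ≤ mP → ContinuousOn z (Icc 0 (τ k)) := by
      intro k
      induction k with
      | zero => intro _; rw [hτ0, Icc_self]; exact continuousOn_singleton z 0
      | succ k ih =>
        intro hk
        have h1 := ih (by omega)
        have h2 := hpiece k (by omega)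
        have h3 := continuousOn_union_of_isClosed' isClosed_Icc isClosed_Icc h1 h2
        rwa [Icc_union_Icc_eq_Icc (hτ_nonneg k (by omega)) (hmono k (by omega))] at h3
    have := H mP le_rfl; rwa [hτm] at this
  -- the error bound for the Euler slope
  set ε : ℝ := L * ((1 + C) * (2:ℝ) ^ (-(N:ℤ))) with hε
  -- generic derivative fact on a covering interval
  have hder_any : ∀ t : ℝ, ∀ k, k < mP → τ k ≤ t → t < τ (k + 1) →
      HasDerivWithinAt z (f (τ k) (zg k) (u (τ k)) (d (τ k))) (Ici t) t := by
    intro t k hk ht1 ht2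
    have hΔ : (0:ℝ) < τ (k + 1) - τ k := by linarith
    set w := zg (k + 1) - zg k with hw
    have hg : HasDerivAt (fun s => zg k + ((s - τ k) / (τ (k + 1) - τ k)) • w)
        ((1 / (τ (k + 1) - τ k)) • w) t := by
      have h1 : HasDerivAt (fun s : ℝ => (s - τ k) / (τ (k + 1) - τ k))
          (1 / (τ (k + 1) - τ k)) t := ((hasDerivAt_id t).sub_const (τ k)).div_const _
      exact (h1.smul_const w).const_add (zg k)
    have heq : (fun s => zg k + ((s - τ k) / (τ (k + 1) - τ k)) • w) =ᶠ[nhdsWithin t (Ici t)]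
        z := by
      filter_upwards [self_mem_nhdsWithin,
        mem_nhdsWithin_of_mem_nhds (Iio_mem_nhds ht2)] with s hs1 hs2
      exact (hzinterp k hk s ⟨le_trans ht1 hs1, hs2⟩).symm
    have hder : HasDerivWithinAt z ((1 / (τ (k + 1) - τ k)) • w) (Ici t) t := by
      refine hg.hasDerivWithinAt.congr_of_eventuallyEq heq.symm ?_
      exact hzinterp k hk t ⟨ht1, ht2⟩
    have hval : (1 / (τ (k + 1) - τ k)) • w = f (τ k) (zg k) (u (τ k)) (d (τ k)) := by
      rw [hw, hzgrec k hk, add_sub_cancel_left, smul_smul, one_div,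
        inv_mul_cancel₀ (ne_of_gt hΔ), one_smul]
    rwa [hval] at hder
  -- generic bound fact on a covering interval
  have hbnd_any : ∀ t : ℝ, ∀ k, k < mP → τ k ≤ t → t < τ (k + 1) →
      dist (f (τ k) (zg k) (u (τ k)) (d (τ k))) (f t (z t) (u t) (d t)) ≤ ε := by
    intro t k hk ht1 ht2
    obtain ⟨hu, hd⟩ := hpc k hk t ⟨ht1, ht2⟩
    have hΔ : (0:ℝ) < τ (k + 1) - τ k := by linarith
    rw [dist_eq_norm, hu, hd]
    refine le_trans (hLip (τ k) t (zg k) (z t) (u (τ k)) (u (τ k)) (d (τ k)) (d (τ k))) ?_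
    have h1 : |τ k - t| ≤ (2:ℝ) ^ (-(N:ℤ)) := by
      rw [abs_of_nonpos (by linarith)]
      have := hmesh k hk
      linarith
    have h2 : ‖zg k - z t‖ ≤ C * (2:ℝ) ^ (-(N:ℤ)) := by
      rw [hzinterp k hk t ⟨ht1, ht2⟩]
      have : zg k - (zg k + ((t - τ k) / (τ (k + 1) - τ k)) • (zg (k + 1) - zg k)) =
          -(((t - τ k) / (τ (k + 1) - τ k)) • (zg (k + 1) - zg k)) := by abel
      rw [this, norm_neg, norm_smul, Real.norm_eq_abs,
        abs_of_nonneg (div_nonneg (by linarith) hΔ.le)]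
      have hθ : (t - τ k) / (τ (k + 1) - τ k) ≤ 1 := by
        rw [div_le_one hΔ]; linarith
      have hstep' : ‖zg (k + 1) - zg k‖ ≤ C * (2:ℝ) ^ (-(N:ℤ)) :=
        (hstep k hk).trans (mul_le_mul_of_nonneg_left (hmesh k hk) hC.le)
      calc (t - τ k) / (τ (k + 1) - τ k) * ‖zg (k + 1) - zg k‖
          ≤ 1 * ‖zg (k + 1) - zg k‖ :=
            mul_le_mul_of_nonneg_right hθ (norm_nonneg _)
        _ = ‖zg (k + 1) - zg k‖ := one_mul _
        _ ≤ C * (2:ℝ) ^ (-(N:ℤ)) := hstep'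
    have h3 : ‖u (τ k) - u (τ k)‖ = 0 := by simp
    have h4 : ‖d (τ k) - d (τ k)‖ = 0 := by simp
    rw [h3, h4, hε]
    have : |τ k - t| + ‖zg k - z t‖ + 0 + 0 ≤ (1 + C) * (2:ℝ) ^ (-(N:ℤ)) := by
      have : (1 + C) * (2:ℝ) ^ (-(N:ℤ)) = (2:ℝ) ^ (-(N:ℤ)) + C * (2:ℝ) ^ (-(N:ℤ)) := by ring
      rw [this]
      linarith
    exact mul_le_mul_of_nonneg_left this hL.le
  -- the global Euler slope function (via choice)
  set z' : ℝ → EuclideanSpace ℝ (Fin n) := fun t =>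
    if h : ∃ k, k < mP ∧ τ k ≤ t ∧ t < τ (k + 1) then
      f (τ h.choose) (zg h.choose) (u (τ h.choose)) (d (τ h.choose)) else 0 with hz'def
  have hz'der : ∀ t ∈ Ico (0:ℝ) 1, HasDerivWithinAt z (z' t) (Ici t) t := by
    intro t ht
    have h : ∃ k, k < mP ∧ τ k ≤ t ∧ t < τ (k + 1) := hcover t ht.1 ht.2
    rw [hz'def]
    simp only [dif_pos h]
    obtain ⟨h1, h2, h3⟩ := h.choose_spec
    exact hder_any t h.choose h1 h2 h3
  have hz'bnd : ∀ t ∈ Ico (0:ℝ) 1, dist (z' t) (f t (z t) (u t) (d t)) ≤ ε := by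
    intro t ht
    have h : ∃ k, k < mP ∧ τ k ≤ t ∧ t < τ (k + 1) := hcover t ht.1 ht.2
    rw [hz'def]
    simp only [dif_pos h]
    obtain ⟨h1, h2, h3⟩ := h.choose_spec
    exact hbnd_any t h.choose h1 h2 h3
  -- the exact solution side
  have hxcont : ContinuousOn x (Icc 0 1) := fun t ht =>
    (hx t ht).continuousAt.continuousWithinAt
  have hx'der : ∀ t ∈ Ico (0:ℝ) 1, HasDerivWithinAt x (f t (x t) (u t) (d t)) (Ici t) t :=
    fun t ht => (hx t (Ico_subset_Icc_self ht)).hasDerivWithinAt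
  have hx'bnd : ∀ t ∈ Ico (0:ℝ) 1,
      dist (f t (x t) (u t) (d t)) (f t (x t) (u t) (d t)) ≤ 0 := by
    intro t _; rw [dist_self]
  -- Lipschitz property of the vector field in the state variable
  have hvlip : ∀ t : ℝ, LipschitzWith L.toNNReal (fun y => f t y (u t) (d t)) := by
    intro t
    apply LipschitzWith.of_dist_le_mul
    intro y₁ y₂
    rw [dist_eq_norm, dist_eq_norm, Real.coe_toNNReal L hL.le]
    have := hLip t t y₁ y₂ (u t) (u t) (d t) (d t)
    simpa using this
  -- initial condition
  have hinit : dist (z 0) (x 0) ≤ 0 := by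
    have hz0 : z 0 = x₀ := by
      rw [← hτ0, hzval 0 (Nat.zero_le mP), hzg0]
    rw [hz0, hx0, dist_self]
  -- apply the Grönwall comparison
  have main := dist_le_of_approx_trajectories_ODE
    (v := fun t y => f t y (u t) (d t)) hvlip hzcont hz'der hz'bnd hxcont hx'der hx'bnd hinit
  intro t ht
  have h := main t ht
  rw [dist_eq_norm] at h
  refine h.trans ?_
  have hKL : ((L.toNNReal : ℝ)) = L := Real.coe_toNNReal L hL.le
  rw [hKL, gronwallBound_of_K_ne_0 (ne_of_gt hL)]
  simp only [zero_mul, zero_add, add_zero, sub_zero]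
  -- now bound ε / L * (exp (L * t) - 1)
  have hεL : ε / L = (1 + C) * (2:ℝ) ^ (-(N:ℤ)) := by
    rw [hε, mul_comm, mul_div_assoc, div_self (ne_of_gt hL), mul_one]
  have hexp1 : Real.exp (L * t) ≤ Real.exp L := by
    apply Real.exp_le_exp.mpr
    nlinarith [ht.1, ht.2]
  have hexp2 : Real.exp L - 1 ≤ L * Real.exp L := by
    have h1 : -L + 1 ≤ Real.exp (-L) := Real.add_one_le_exp (-L)
    have h2 : (-L + 1) * Real.exp L ≤ Real.exp (-L) * Real.exp L :=
      mul_le_mul_of_nonneg_right h1 (Real.exp_pos L).le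
    have h3 : (-L : ℝ) + L = 0 := by ring
    rw [← Real.exp_add, h3, Real.exp_zero] at h2
    nlinarith
  have hP : (0:ℝ) ≤ (1 + C) * (2:ℝ) ^ (-(N:ℤ)) := by positivity
  calc ε / L * (Real.exp (L * t) - 1)
      ≤ (1 + C) * (2:ℝ) ^ (-(N:ℤ)) * (L * Real.exp L) := by
        rw [hεL]
        apply mul_le_mul_of_nonneg_left _ hP
        linarith
    _ = (1 + C) * L * Real.exp L * (2:ℝ) ^ (-(N:ℤ)) := by ring
end

section
/- Let d : [0,1] → Σ_r^q be piecewise constant on a dyadic grid of size 2^{−N} (i.e., d constant on each [k 2^{−N}, (k+1)2^{−N})), and let P_N(d) be its pulse-width modulation: [P_N(d)]_i(t) = 1 if t ∈ [2^{−N}(k + Σ_{j<i} d_j(k 2^{−N})), 2^{−N}(k + Σ_{j≤i} d_j(k 2^{−N}))) for some k, and 0 otherwise. Then for every f : [0,1] → ℝ^q of bounded variation, |⟨d − P_N(d), f⟩| ≤ 2^{−N} ‖f‖_BV, where ⟨g,f⟩ = ∫₀¹ Σ_i g_i(t) f_i(t) dt and ‖f‖_BV = ∫₀¹ ‖ḟ(t)‖₁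 dt is the total variation. -/
open MeasureTheory Set

/-!
On the cell `[k h, (k + 1) h)`, `h = 2^{-N}`, the modulation `P` switches coordinate `i` on for a
time `h d_i(k h)`, so `φ_i = d_i - P_i` has mean zero over the cell and `|φ_i| ≤ 1`. Hence
`∫ φ_i f_i = ∫ φ_i (f_i - f_i(k h))`, and as `f_i` is a primitive of `f_i'` it moves by at most
`∫_cell |f_i'|` inside the cell; the cell therefore contributes at most `h ∫_cell |f_i'|`.
Summing over coordinates and cells gives the bound.
-/

section Primitive

variable {f f' : ℝ → ℝ} {a b : ℝ}

theorem eq_add_integral_of_Icc_subset (hf' : IntervalIntegrable f' volume a b)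
    (hf : ∀ t ∈ Icc a b, f t = f a + ∫ s in a..t, f' s) {c e : ℝ} (hce : Icc c e ⊆ Icc a b) :
    ∀ t ∈ Icc c e, f t = f c + ∫ s in c..t, f' s := by
  intro t ht
  have hc : c ∈ Icc a b := hce ⟨le_rfl, ht.1.trans ht.2⟩
  have hint : ∀ x ∈ Icc a b, IntervalIntegrable f' volume a x := fun x hx =>
    hf'.mono_set (uIcc_subset_uIcc_left (by rwa [uIcc_of_le (hx.1.trans hx.2)]))
  rw [hf t (hce ht), hf c hc, add_assoc,
    intervalIntegral.integral_add_adjacent_intervals (hint c hc)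
      ((hint c hc).symm.trans (hint t (hce ht)))]

theorem continuousOn_of_eq_add_integral (hab : a ≤ b) (hf' : IntervalIntegrable f' volume a b)
    (hf : ∀ t ∈ Icc a b, f t = f a + ∫ s in a..t, f' s) : ContinuousOn f (Icc a b) := by
  have hprim := intervalIntegral.continuousOn_primitive_interval' hf' left_mem_uIcc
  rw [uIcc_of_le hab] at hprim
  exact (continuousOn_const.add hprim).congr hf

theorem abs_sub_le_integral_abs_of_eq_add_integral (hf' : IntervalIntegrable f' volume a b)
    (hf : ∀ t ∈ Icc a b, f t = f a + ∫ s in a..t, f' s) :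
    ∀ t ∈ Icc a b, |f t - f a| ≤ ∫ s in a..b, |f' s| := by
  intro t ht
  rw [hf t ht, add_sub_cancel_left]
  calc |∫ s in a..t, f' s| ≤ ∫ s in a..t, |f' s| :=
        intervalIntegral.abs_integral_le_integral_abs ht.1
    _ ≤ ∫ s in a..b, |f' s| :=
        intervalIntegral.integral_mono_interval le_rfl ht.1 ht.2
          (Filter.Eventually.of_forall fun _ => abs_nonneg _) hf'.abs

end Primitive

theorem abs_integral_mul_le_of_integral_eq_zero {φ F : ℝ → ℝ} {a b M : ℝ} (hab : a ≤ b)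
    (hφ : IntervalIntegrable φ volume a b) (hφ0 : ∫ t in a..b, φ t = 0)
    (hφ1 : ∀ t ∈ Icc a b, |φ t| ≤ 1) (hF : ContinuousOn F (Icc a b))
    (hM : ∀ t ∈ Icc a b, |F t - F a| ≤ M) :
    |∫ t in a..b, φ t * F t| ≤ (b - a) * M := by
  have hφF : IntervalIntegrable (fun t => φ t * (F t - F a)) volume a b :=
    hφ.mul_continuousOn (by rw [uIcc_of_le hab]; exact hF.sub continuousOn_const)
  have hshift : ∫ t in a..b, φ t * F t = ∫ t in a..b, φ t * (F t - F a) :=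
    calc ∫ t in a..b, φ t * F t = ∫ t in a..b, (φ t * (F t - F a) + φ t * F a) := by
          congr 1; ext t; ring
      _ = (∫ t in a..b, φ t * (F t - F a)) + (∫ t in a..b, φ t) * F a := by
          rw [intervalIntegral.integral_add hφF (hφ.mul_const _),
            intervalIntegral.integral_mul_const]
      _ = ∫ t in a..b, φ t * (F t - F a) := by rw [hφ0, zero_mul, add_zero]
  have hbound : ∀ t ∈ uIoc a b, ‖φ t * (F t - F a)‖ ≤ M := by
    intro t ht
    have ht' : t ∈ Icc a b := Ioc_subset_Icc_self (by rwa [uIoc_of_le hab] at ht)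
    rw [Real.norm_eq_abs, abs_mul]
    exact (mul_le_of_le_one_left (abs_nonneg _) (hφ1 t ht')).trans (hM t ht')
  have := intervalIntegral.norm_integral_le_of_norm_le_const hbound
  rwa [Real.norm_eq_abs, abs_of_nonneg (sub_nonneg.2 hab), mul_comm, ← hshift] at this

theorem intervalIntegral.integral_indicator_one_of_subset_Ico {s : Set ℝ} {a b : ℝ}
    (hab : a ≤ b) (hs : MeasurableSet s) (hsub : s ⊆ Ico a b) :
    ∫ t in a..b, s.indicator 1 t = volume.real s := by
  rw [intervalIntegral.integral_of_le hab, ← integral_Ico_eq_integral_Ioc,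
    integral_indicator_one hs, measureReal_restrict_apply hs, inter_eq_left.2 hsub]

theorem intervalIntegrable_indicator_one {s : Set ℝ} {a b : ℝ} (hs : MeasurableSet s) :
    IntervalIntegrable (s.indicator (1 : ℝ → ℝ)) volume a b :=
  ⟨(integrableOn_const measure_Ioc_lt_top.ne).indicator hs,
    (integrableOn_const measure_Ioc_lt_top.ne).indicator hs⟩

theorem integral_sub_indicator_eq_zero {s : Set ℝ} {a b c : ℝ} (hab : a ≤ b)
    (hs : MeasurableSet s) (hsub : s ⊆ Ico a b) (hvol : volume.real s = (b - a) * c) :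
    ∫ t in a..b, (c - s.indicator 1 t) = 0 := by
  rw [intervalIntegral.integral_sub intervalIntegrable_const
      (intervalIntegrable_indicator_one hs),
    intervalIntegral.integral_const,
    intervalIntegral.integral_indicator_one_of_subset_Ico hab hs hsub, hvol, smul_eq_mul, sub_self]

theorem abs_sub_indicator_one_le {s : Set ℝ} {c : ℝ} (hc : c ∈ Icc 0 1) (t : ℝ) :
    |c - s.indicator 1 t| ≤ 1 := by
  by_cases ht : t ∈ s
  · rw [indicator_of_mem ht, Pi.one_apply, abs_le]
    constructor <;> linarith [hc.1, hc.2]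
  · rw [indicator_of_notMem ht, sub_zero, abs_of_nonneg hc.1]
    exact hc.2

theorem Finset.sum_filter_le_eq_add_sum_filter_lt {ι M : Type*} [Fintype ι] [LinearOrder ι]
    [LocallyFiniteOrderBot ι] [AddCommMonoid M] (c : ι → M) (i : ι) :
    ∑ j ∈ Finset.univ.filter (· ≤ i), c j = c i + ∑ j ∈ Finset.univ.filter (· < i), c j := by
  rw [Finset.filter_ge_eq_Iic, Finset.filter_gt_eq_Iio, ← Finset.Iio_insert,
    Finset.sum_insert Finset.notMem_Iio_self]

theorem Nat.floor_div_eq_of_mem_Ico {h t : ℝ} (hh : 0 < h) {k : ℕ}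
    (ht : t ∈ Ico (k * h) ((k + 1) * h)) : ⌊t / h⌋₊ = k := by
  rw [Nat.floor_eq_iff (div_nonneg ((by positivity : (0 : ℝ) ≤ k * h).trans ht.1) hh.le),
    le_div_iff₀ hh, div_lt_iff₀ hh]
  exact ht

theorem Icc_mul_subset_Icc_mul {h : ℝ} (hh : 0 ≤ h) {k n : ℕ} (hk : k < n) :
    Icc ((k : ℝ) * h) ((k + 1) * h) ⊆ Icc 0 (n * h) :=
  Icc_subset_Icc (by positivity) (mul_le_mul_of_nonneg_right (by exact_mod_cast hk) hh)

def pwmPulse {q : ℕ} (h : ℝ) (c : Fin q → ℝ) (k : ℕ) (i : Fin q) : Set ℝ :=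
  Ico (h * (k + ∑ j ∈ Finset.univ.filter (· < i), c j))
    (h * (k + ∑ j ∈ Finset.univ.filter (· ≤ i), c j))

section Pulse

variable {q : ℕ} {h : ℝ} {c : Fin q → ℝ}

theorem pwmPulse_eq_Ico (k : ℕ) (i : Fin q) :
    pwmPulse h c k i = Ico (h * (k + ∑ j ∈ Finset.univ.filter (· < i), c j))
      (h * (k + ∑ j ∈ Finset.univ.filter (· < i), c j) + h * c i) := by
  rw [pwmPulse, Finset.sum_filter_le_eq_add_sum_filter_lt]
  ring_nf

theorem measurableSet_pwmPulse (k : ℕ) (i : Fin q) :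
    MeasurableSet (pwmPulse h c k i) :=
  measurableSet_Ico

theorem pwmPulse_subset_Ico (hh : 0 ≤ h) (hc : ∀ j, 0 ≤ c j) (hc1 : ∑ j, c j ≤ 1) (k : ℕ)
    (i : Fin q) : pwmPulse h c k i ⊆ Ico (k * h) ((k + 1) * h) := by
  have hlt : 0 ≤ ∑ j ∈ Finset.univ.filter (· < i), c j := Finset.sum_nonneg fun j _ => hc j
  have hle : ∑ j ∈ Finset.univ.filter (· ≤ i), c j ≤ 1 :=
    (Finset.sum_le_sum_of_subset_of_nonneg (Finset.filter_subset _ _) fun j _ _ => hc j).trans hc1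
  exact Ico_subset_Ico (by nlinarith) (by nlinarith)

theorem volume_real_pwmPulse (hh : 0 ≤ h) (k : ℕ) {i : Fin q} (hci : 0 ≤ c i) :
    volume.real (pwmPulse h c k i) = h * c i := by
  rw [pwmPulse_eq_Ico, Real.volume_real_Ico_of_le (le_add_of_nonneg_right (mul_nonneg hh hci))]
  ring

end Pulse

theorem eq_indicator_pwmPulse_of_mem_Ico {q n : ℕ} {h : ℝ} (hh : 0 < h) {d P : ℝ → Fin q → ℝ}
    (hd : ∀ k < n, (∀ j, 0 ≤ d (k * h) j) ∧ ∑ j, d (k * h) j ≤ 1)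
    (hP01 : ∀ t i, P t i = 0 ∨ P t i = 1)
    (hP : ∀ t i, P t i = 1 ↔ ∃ k < n, t ∈ pwmPulse h (d (k * h)) k i)
    {k : ℕ} (hk : k < n) {t : ℝ} (ht : t ∈ Ico (k * h) ((k + 1) * h)) (i : Fin q) :
    P t i = (pwmPulse h (d (k * h)) k i).indicator 1 t := by
  by_cases hmem : t ∈ pwmPulse h (d (k * h)) k i
  · rw [indicator_of_mem hmem, Pi.one_apply]
    exact (hP t i).2 ⟨k, hk, hmem⟩
  · rw [indicator_of_notMem hmem]
    refine (hP01 t i).resolve_right fun hPt => hmem ?_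
    obtain ⟨k', hk', ht'⟩ := (hP t i).1 hPt
    have ht'_cell := pwmPulse_subset_Ico hh.le (hd k' hk').1 (hd k' hk').2 k' i ht'
    obtain rfl : k' = k :=
      (Nat.floor_div_eq_of_mem_Ico hh ht'_cell).symm.trans (Nat.floor_div_eq_of_mem_Ico hh ht)
    exact ht'

section Cell

variable {q : ℕ} {h : ℝ} {c : Fin q → ℝ} {f f' : ℝ → Fin q → ℝ} {k : ℕ}

theorem intervalIntegrable_pwm_cell (hh : 0 ≤ h)
    (hf' : ∀ i, IntervalIntegrable (fun t => f' t i) volume (k * h) ((k + 1) * h))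
    (hf : ∀ i, ∀ t ∈ Icc (k * h) ((k + 1) * h), f t i = f (k * h) i + ∫ s in (k * h)..t, f' s i) :
    IntervalIntegrable (fun t => ∑ i, (c i - (pwmPulse h c k i).indicator 1 t) * f t i) volume
      (k * h) ((k + 1) * h) := by
  have hab : (k : ℝ) * h ≤ (k + 1) * h := by nlinarith
  simpa only [Finset.sum_fn] using IntervalIntegrable.sum Finset.univ fun i _ =>
    (intervalIntegrable_const.sub (intervalIntegrable_indicator_one (measurableSet_pwmPulse k i))
      ).mul_continuousOn (uIcc_of_le hab ▸ continuousOn_of_eq_add_integral hab (hf' i) (hf i))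

theorem abs_integral_pwm_cell_le (hh : 0 ≤ h) (hc : ∀ j, c j ∈ Icc 0 1) (hc1 : ∑ j, c j ≤ 1)
    (hf' : ∀ i, IntervalIntegrable (fun t => f' t i) volume (k * h) ((k + 1) * h))
    (hf : ∀ i, ∀ t ∈ Icc (k * h) ((k + 1) * h), f t i = f (k * h) i + ∫ s in (k * h)..t, f' s i) :
    |∫ t in (k * h)..((k + 1) * h), ∑ i, (c i - (pwmPulse h c k i).indicator 1 t) * f t i| ≤
      h * ∫ t in (k * h)..((k + 1) * h), ∑ i, |f' t i| := by
  have hab : (k : ℝ) * h ≤ (k + 1) * h := by nlinarith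
  have hlen : ((k : ℝ) + 1) * h - k * h = h := by ring
  have hcont : ∀ i, ContinuousOn (fun t => f t i) (Icc (k * h) ((k + 1) * h)) := fun i =>
    continuousOn_of_eq_add_integral hab (hf' i) (hf i)
  have hφ (i : Fin q) : IntervalIntegrable (fun t => c i - (pwmPulse h c k i).indicator 1 t)
      volume (k * h) ((k + 1) * h) :=
    intervalIntegrable_const.sub (intervalIntegrable_indicator_one (measurableSet_pwmPulse k i))
  rw [intervalIntegral.integral_finsetSum fun i _ =>
      (hφ i).mul_continuousOn (uIcc_of_le hab ▸ hcont i),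
    intervalIntegral.integral_finsetSum fun i _ => (hf' i).abs, Finset.mul_sum]
  refine (Finset.abs_sum_le_sum_abs _ _).trans (Finset.sum_le_sum fun i _ => ?_)
  have hmean : ∫ t in (k * h)..((k + 1) * h), (c i - (pwmPulse h c k i).indicator 1 t) = 0 :=
    integral_sub_indicator_eq_zero hab (measurableSet_pwmPulse k i)
      (pwmPulse_subset_Ico hh (fun j => (hc j).1) hc1 k i)
      (by rw [volume_real_pwmPulse hh k (hc i).1, hlen])
  refine (abs_integral_mul_le_of_integral_eq_zero hab (hφ i) hmean
    (fun t _ => abs_sub_indicator_one_le (hc i) t) (hcont i)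
    (abs_sub_le_integral_abs_of_eq_add_integral (hf' i) (hf i))).trans_eq ?_
  rw [hlen]

end Cell

theorem sum_integral_cells {g : ℝ → ℝ} {h b : ℝ} {n : ℕ} (hnb : n * h = b)
    (hg : ∀ k < n, IntervalIntegrable g volume (k * h) ((k + 1) * h)) :
    ∑ k ∈ Finset.range n, ∫ t in (k * h)..((k + 1) * h), g t = ∫ t in 0..b, g t := by
  have := intervalIntegral.sum_integral_adjacent_intervals (a := fun k : ℕ => (k : ℝ) * h)
    (μ := volume) (by push_cast; exact hg)
  push_cast at this
  rwa [zero_mul, hnb] at this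

theorem abs_integral_le_of_forall_cell {g w : ℝ → ℝ} {h b C : ℝ} {n : ℕ} (hnb : n * h = b)
    (hg : ∀ k < n, IntervalIntegrable g volume (k * h) ((k + 1) * h))
    (hw : ∀ k < n, IntervalIntegrable w volume (k * h) ((k + 1) * h))
    (hcell : ∀ k < n, |∫ t in (k * h)..((k + 1) * h), g t| ≤
      C * ∫ t in (k * h)..((k + 1) * h), w t) :
    |∫ t in 0..b, g t| ≤ C * ∫ t in 0..b, w t := by
  rw [← sum_integral_cells hnb hg, ← sum_integral_cells hnb hw, Finset.mul_sum]
  exact (Finset.abs_sum_le_sum_abs _ _).trans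
    (Finset.sum_le_sum fun k hk => hcell k (Finset.mem_range.1 hk))

theorem pwm_weak_approx_general (q N : ℕ) (d : ℝ → Fin q → ℝ)
    (hsimplex : ∀ t ∈ Set.Icc (0:ℝ) 1, (∀ i, d t i ∈ Set.Icc (0:ℝ) 1) ∧ ∑ i, d t i = 1)
    (hpc : ∀ k < 2 ^ N, ∀ t ∈ Set.Ico ((k:ℝ) * (2:ℝ) ^ (-(N:ℤ))) (((k:ℝ) + 1) * (2:ℝ) ^ (-(N:ℤ))),
      d t = d ((k:ℝ) * (2:ℝ) ^ (-(N:ℤ))))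
    (P : ℝ → Fin q → ℝ)
    (hP01 : ∀ (t : ℝ) (i : Fin q), P t i = 0 ∨ P t i = 1)
    (hP : ∀ (t : ℝ) (i : Fin q), P t i = 1 ↔ ∃ k : ℕ, k < 2 ^ N ∧
      t ∈ Set.Ico
        ((2:ℝ) ^ (-(N:ℤ)) * ((k:ℝ) +
          ∑ j ∈ Finset.univ.filter (fun j : Fin q => j < i), d ((k:ℝ) * (2:ℝ) ^ (-(N:ℤ))) j))
        ((2:ℝ) ^ (-(N:ℤ)) * ((k:ℝ) +
          ∑ j ∈ Finset.univ.filter (fun j : Fin q => j ≤ i), d ((k:ℝ) * (2:ℝ) ^ (-(N:ℤ))) j))) :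
    ∀ (f f' : ℝ → Fin q → ℝ),
      (∀ i, IntervalIntegrable (fun t => f' t i) volume 0 1) →
      (∀ i, ∀ t ∈ Set.Icc (0:ℝ) 1, f t i = f 0 i + ∫ s in (0:ℝ)..t, f' s i) →
      |∫ t in (0:ℝ)..1, ∑ i, (d t i - P t i) * f t i| ≤
        (2:ℝ) ^ (-(N:ℤ)) * ∫ t in (0:ℝ)..1, ∑ i, |f' t i| := by
  intro f f' hf' hf
  set h : ℝ := (2:ℝ) ^ (-(N:ℤ)) with h_def
  have hh : 0 < h := by positivity
  have hnh : ((2 ^ N : ℕ) : ℝ) * h = 1 := by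
    rw [h_def, Nat.cast_pow, Nat.cast_ofNat, ← zpow_natCast, ← zpow_add₀ two_ne_zero,
      add_neg_cancel, zpow_zero]
  have hcell (k : ℕ) (hk : k < 2 ^ N) : Icc ((k : ℝ) * h) ((k + 1) * h) ⊆ Icc 0 1 :=
    hnh ▸ Icc_mul_subset_Icc_mul hh.le hk
  have hgrid (k : ℕ) (hk : k < 2 ^ N) : (∀ j, d (k * h) j ∈ Icc 0 1) ∧ ∑ j, d (k * h) j = 1 :=
    hsimplex _ (hcell k hk (left_mem_Icc.2 (by nlinarith)))
  have hf'_cell (k : ℕ) (hk : k < 2 ^ N) (i : Fin q) :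
      IntervalIntegrable (fun t => f' t i) volume (k * h) ((k + 1) * h) :=
    (hf' i).mono_set (by
      rw [uIcc_of_le zero_le_one, uIcc_of_le (by nlinarith)]; exact hcell k hk)
  have hf_cell (k : ℕ) (hk : k < 2 ^ N) (i : Fin q) : ∀ t ∈ Icc ((k : ℝ) * h) ((k + 1) * h),
      f t i = f (k * h) i + ∫ s in (k * h)..t, f' s i :=
    eq_add_integral_of_Icc_subset (hf' i) (hf i) (hcell k hk)
  have hintegrand (k : ℕ) (hk : k < 2 ^ N) : EqOn
      (fun t => ∑ i, (d (k * h) i - (pwmPulse h (d (k * h)) k i).indicator 1 t) * f t i)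
      (fun t => ∑ i, (d t i - P t i) * f t i) (uIoo (k * h) ((k + 1) * h)) := by
    intro t ht
    rw [uIoo_of_le (by nlinarith)] at ht
    have ht' := Ioo_subset_Ico_self ht
    simp only [hpc k (by exact_mod_cast hk) t ht', eq_indicator_pwmPulse_of_mem_Ico hh
      (fun k hk => ⟨fun j => ((hgrid k hk).1 j).1, (hgrid k hk).2.le⟩) hP01 hP hk ht']
  refine abs_integral_le_of_forall_cell hnh (fun k hk => ?_) (fun k hk => ?_) (fun k hk => ?_)
  · exact (intervalIntegrable_pwm_cell hh.le (hf'_cell k hk) (hf_cell k hk)).congr_uIoo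
      (hintegrand k hk)
  · simpa only [Finset.sum_fn] using
      IntervalIntegrable.sum Finset.univ fun i _ => (hf'_cell k hk i).abs
  · rw [← intervalIntegral.integral_congr_uIoo (hintegrand k hk)]
    exact abs_integral_pwm_cell_le hh.le (hgrid k hk).1 (hgrid k hk).2.le (hf'_cell k hk)
      (hf_cell k hk)

/-- Weak approximation by pulse-width modulation: if `d` is a simplex-valued input,
piecewise constant on the dyadic grid of size `2^{-N}`, and `P` is its pulse-width
modulation, then for every `f : [0,1] → ℝ^q` of bounded variation (with weak derivative
`f'`), `|⟨d - P_N(d), f⟩| ≤ 2^{-N} ‖f‖_BV = 2^{-N} ∫₀¹ ‖f'(t)‖₁ dt`. -/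
theorem pwm_weak_approx (q N : ℕ) (hq : 0 < q) (d : ℝ → Fin q → ℝ)
    (hsimplex : ∀ t ∈ Set.Icc (0:ℝ) 1, (∀ i, d t i ∈ Set.Icc (0:ℝ) 1) ∧ ∑ i, d t i = 1)
    (hpc : ∀ k < 2 ^ N, ∀ t ∈ Set.Ico ((k:ℝ) * (2:ℝ) ^ (-(N:ℤ))) (((k:ℝ) + 1) * (2:ℝ) ^ (-(N:ℤ))),
      d t = d ((k:ℝ) * (2:ℝ) ^ (-(N:ℤ))))
    (P : ℝ → Fin q → ℝ)
    (hP01 : ∀ (t : ℝ) (i : Fin q), P t i = 0 ∨ P t i = 1)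
    (hP : ∀ (t : ℝ) (i : Fin q), P t i = 1 ↔ ∃ k : ℕ, k < 2 ^ N ∧
      t ∈ Set.Ico
        ((2:ℝ) ^ (-(N:ℤ)) * ((k:ℝ) +
          ∑ j ∈ Finset.univ.filter (fun j : Fin q => j < i), d ((k:ℝ) * (2:ℝ) ^ (-(N:ℤ))) j))
        ((2:ℝ) ^ (-(N:ℤ)) * ((k:ℝ) +
          ∑ j ∈ Finset.univ.filter (fun j : Fin q => j ≤ i), d ((k:ℝ) * (2:ℝ) ^ (-(N:ℤ))) j))) :
    ∀ (f f' : ℝ → Fin q → ℝ),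
      (∀ i, IntervalIntegrable (fun t => f' t i) volume 0 1) →
      (∀ i, ∀ t ∈ Set.Icc (0:ℝ) 1, f t i = f 0 i + ∫ s in (0:ℝ)..t, f' s i) →
      |∫ t in (0:ℝ)..1, ∑ i, (d t i - P t i) * f t i| ≤
        (2:ℝ) ^ (-(N:ℤ)) * ∫ t in (0:ℝ)..1, ∑ i, |f' t i| :=
  pwm_weak_approx_general q N d hsimplex hpc P hP01 hP
end

section
/- Under the standing Lipschitz assumptions (each mode field and each constraint function h_j and their x-derivatives are L-Lipschitz, everything bounded by C on the solution region), the flow map φ_t : X_r → ℝⁿ taking a relaxed input ξ = (u,d) to the solution x^{(ξ)}(t) of ẋ = Σ_i d_i(t) f(t,x,u,e_i), x(0) = x₀, is Lipschitz continuous with respect to the norm ‖ξ‖_X = ‖u‖_{L²} + ‖d‖_{L²}, uniformly in t ∈ [0,1]: there exists L' > 0 such that ‖φ_t(ξ₁) − φ_t(ξ₂)‖₂ ≤ L' ‖ξ₁ − ξ₂‖_X for all ξ₁, ξ₂ ∈ X_r and all t. -/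
open MeasureTheory Set

/-! The difference `y = x₁ - x₂` of two trajectories satisfies `‖y'‖ ≤ L ‖y‖ + ε` with
`ε = L ‖u₁ - u₂‖ + C q ‖d₁ - d₂‖`: the relaxed field is a convex combination, with weights `d₁`,
of the `L`-Lipschitz modes, plus a correction linear in `d₁ - d₂` whose coefficients are bounded
by `C`. Integrating this bound gives `‖y t‖ ≤ ∫₀¹ ε + L ∫₀ᵗ ‖y‖`, so Grönwall's inequality applied
to the primitive of `‖y‖` yields `‖y t‖ ≤ e^L ∫₀¹ ε`, and on the probability space `[0, 1]` the
`L¹` norms in `∫₀¹ ε` are bounded by the `L²` norms. -/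

theorem EuclideanSpace.sum_abs_le_card_mul_norm {q : ℕ} (x : EuclideanSpace ℝ (Fin q)) :
    ∑ i, |x i| ≤ q * ‖x‖ :=
  calc ∑ i, |x i| ≤ ∑ _i : Fin q, ‖x‖ := Finset.sum_le_sum fun i _ => PiLp.norm_apply_le x i
    _ = q * ‖x‖ := by simp

theorem norm_sum_smul_sub_sum_smul_le {ι E : Type*} [Fintype ι] [SeminormedAddCommGroup E]
    [NormedSpace ℝ E] {a b : ι → ℝ} {v w : ι → E} {δ C : ℝ} (ha : ∀ i, 0 ≤ a i)
    (ha₁ : ∑ i, a i = 1) (hvw : ∀ i, ‖v i - w i‖ ≤ δ) (hw : ∀ i, ‖w i‖ ≤ C) :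
    ‖∑ i, a i • v i - ∑ i, b i • w i‖ ≤ δ + C * ∑ i, |a i - b i| := by
  have hsplit : ∑ i, a i • v i - ∑ i, b i • w i
      = ∑ i, a i • (v i - w i) + ∑ i, (a i - b i) • w i := by
    simp only [smul_sub, sub_smul, Finset.sum_sub_distrib]
    abel
  have hconv : ‖∑ i, a i • (v i - w i)‖ ≤ δ :=
    calc ‖∑ i, a i • (v i - w i)‖ ≤ ∑ i, a i * δ := by
          refine (norm_sum_le _ _).trans (Finset.sum_le_sum fun i _ => ?_)
          rw [norm_smul, Real.norm_of_nonneg (ha i)]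
          exact mul_le_mul_of_nonneg_left (hvw i) (ha i)
      _ = δ := by rw [← Finset.sum_mul, ha₁, one_mul]
  have hweights : ‖∑ i, (a i - b i) • w i‖ ≤ C * ∑ i, |a i - b i| :=
    calc ‖∑ i, (a i - b i) • w i‖ ≤ ∑ i, |a i - b i| * C := by
          refine (norm_sum_le _ _).trans (Finset.sum_le_sum fun i _ => ?_)
          rw [norm_smul, Real.norm_eq_abs]
          exact mul_le_mul_of_nonneg_left (hw i) (abs_nonneg _)
      _ = C * ∑ i, |a i - b i| := by rw [← Finset.sum_mul, mul_comm]
  rw [hsplit]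
  exact (norm_add_le _ _).trans (add_le_add hconv hweights)

noncomputable def relaxedField {X V E : Type*} [AddCommGroup E] [Module ℝ E] {q : ℕ}
    (f : ℝ → X → V → Fin q → E) (t : ℝ) (x : X) (u : V) (d : EuclideanSpace ℝ (Fin q)) : E :=
  ∑ i, d i • f t x u i

theorem norm_relaxedField_sub_le {X V E : Type*} [SeminormedAddCommGroup X]
    [SeminormedAddCommGroup V] [SeminormedAddCommGroup E] [NormedSpace ℝ E] {q : ℕ}
    {f : ℝ → X → V → Fin q → E} {t L C : ℝ} {x₁ x₂ : X} {u₁ u₂ : V}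
    {d₁ d₂ : EuclideanSpace ℝ (Fin q)}
    (hLip : ∀ i x₁ x₂ u₁ u₂, ‖f t x₁ u₁ i - f t x₂ u₂ i‖ ≤ L * (‖x₁ - x₂‖ + ‖u₁ - u₂‖))
    (hbd : ∀ x u i, ‖f t x u i‖ ≤ C) (hC : 0 ≤ C) (hd₁ : ∀ i, 0 ≤ d₁ i) (hd₁sum : ∑ i, d₁ i = 1) :
    ‖relaxedField f t x₁ u₁ d₁ - relaxedField f t x₂ u₂ d₂‖
      ≤ L * (‖x₁ - x₂‖ + ‖u₁ - u₂‖) + C * q * ‖d₁ - d₂‖ :=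
  calc _ ≤ L * (‖x₁ - x₂‖ + ‖u₁ - u₂‖) + C * ∑ i, |d₁ i - d₂ i| :=
        norm_sum_smul_sub_sum_smul_le hd₁ hd₁sum (fun i => hLip i _ _ _ _) (fun i => hbd _ _ i)
    _ ≤ L * (‖x₁ - x₂‖ + ‖u₁ - u₂‖) + C * (q * ‖d₁ - d₂‖) := by
        gcongr
        simpa using EuclideanSpace.sum_abs_le_card_mul_norm (d₁ - d₂)
    _ = L * (‖x₁ - x₂‖ + ‖u₁ - u₂‖) + C * q * ‖d₁ - d₂‖ := by ring

theorem le_mul_exp_of_le_add_mul_integral {r : ℝ → ℝ} {A K a b : ℝ} (hK : 0 ≤ K)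
    (hr : ContinuousOn r (Icc a b))
    (hle : ∀ t ∈ Icc a b, r t ≤ A + K * ∫ s in a..t, r s) :
    ∀ t ∈ Icc a b, r t ≤ A * Real.exp (K * (t - a)) := by
  intro t ht
  have hab : a ≤ b := ht.1.trans ht.2
  set r' : ℝ → ℝ := IccExtend hab ((Icc a b).domRestrict r)
  have hr'c : Continuous r' := hr.domRestrict.Icc_extend'
  have hr'r : EqOn r' r (Icc a b) := fun s hs => IccExtend_of_mem hab _ hs
  set R : ℝ → ℝ := fun τ => ∫ s in a..τ, r' s
  have hRr : ∀ τ ∈ Icc a b, R τ = ∫ s in a..τ, r s := fun τ hτ =>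
    intervalIntegral.integral_congr fun s hs =>
      hr'r (Icc_subset_Icc_right hτ.2 (by rwa [uIcc_of_le hτ.1] at hs))
  have hR : ∀ τ, HasDerivAt R (r' τ) τ := fun τ =>
    (hr'c.integral_hasStrictDerivAt a τ).hasDerivAt
  have hgron : R t ≤ gronwallBound 0 K A (t - a) :=
    le_gronwallBound_of_liminf_deriv_right_le (f' := r')
      (fun τ _ => (hR τ).continuousAt.continuousWithinAt)
      (fun τ _ _ hlt => (hR τ).hasDerivWithinAt.liminf_right_slope_le hlt)
      (by simp [R])
      (fun τ hτ => by
        rw [hr'r (Ico_subset_Icc_self hτ), hRr τ (Ico_subset_Icc_self hτ)]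
        linarith [hle τ (Ico_subset_Icc_self hτ)])
      t ht
  have hgronwallBound : A + K * gronwallBound 0 K A (t - a) = A * Real.exp (K * (t - a)) := by
    rcases eq_or_ne K 0 with rfl | hK₀
    · simp
    · rw [gronwallBound_of_K_ne_0 hK₀]
      field_simp
      ring
  calc r t ≤ A + K * R t := by rw [hRr t ht]; exact hle t ht
    _ ≤ A + K * gronwallBound 0 K A (t - a) := by gcongr
    _ = A * Real.exp (K * (t - a)) := hgronwallBound

theorem norm_le_mul_exp_of_norm_deriv_le {E : Type*} [NormedAddCommGroup E] [NormedSpace ℝ E]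
    {y y' : ℝ → E} {ε : ℝ → ℝ} {K a b : ℝ} (hK : 0 ≤ K)
    (hy : ∀ s ∈ Icc a b, HasDerivAt y (y' s) s) (hε : IntervalIntegrable ε volume a b)
    (hε₀ : ∀ s ∈ Icc a b, 0 ≤ ε s) (bound : ∀ s ∈ Icc a b, ‖y' s‖ ≤ K * ‖y s‖ + ε s) :
    ∀ t ∈ Icc a b, ‖y t‖ ≤ (‖y a‖ + ∫ s in a..b, ε s) * Real.exp (K * (t - a)) := by
  have hyc : ContinuousOn y (Icc a b) := fun s hs => (hy s hs).continuousAt.continuousWithinAt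
  refine le_mul_exp_of_le_add_mul_integral hK (continuous_norm.comp_continuousOn hyc) ?_
  intro t ht
  have hsub : Icc a t ⊆ Icc a b := Icc_subset_Icc_right ht.2
  have hyt : IntervalIntegrable (fun s => ‖y s‖) volume a t :=
    ((continuous_norm.comp_continuousOn hyc).mono hsub).intervalIntegrable_of_Icc ht.1
  have hεt : IntervalIntegrable ε volume a t :=
    hε.mono_set (by rw [uIcc_of_le ht.1, uIcc_of_le (ht.1.trans ht.2)]; exact hsub)
  have hderiv : ∀ᵐ s, s ∈ Ioo a t → ‖deriv y s‖ ≤ K * ‖y s‖ + ε s :=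
    .of_forall fun s hs => by
      rw [(hy s (hsub (Ioo_subset_Icc_self hs))).deriv]
      exact bound s (hsub (Ioo_subset_Icc_self hs))
  calc ‖y t‖ ≤ ‖y a‖ + ‖y t - y a‖ := norm_le_insert' _ _
    _ ≤ ‖y a‖ + ∫ s in a..t, (K * ‖y s‖ + ε s) := by
        gcongr
        exact norm_sub_le_integral_of_norm_deriv_le_of_le ht.1 (hyc.mono hsub)
          (fun s hs => (hy s (hsub (Ioo_subset_Icc_self hs))).differentiableAt
            |>.differentiableWithinAt)
          hderiv ((hyt.const_mul K).add hεt)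
    _ = ‖y a‖ + (K * ∫ s in a..t, ‖y s‖) + ∫ s in a..t, ε s := by
        rw [intervalIntegral.integral_add (hyt.const_mul K) hεt,
          intervalIntegral.integral_const_mul, add_assoc]
    _ ≤ ‖y a‖ + (K * ∫ s in a..t, ‖y s‖) + ∫ s in a..b, ε s := by
        gcongr
        exact intervalIntegral.integral_mono_interval le_rfl ht.1 ht.2
          (ae_restrict_of_forall_mem measurableSet_Ioc fun s hs => hε₀ s ⟨hs.1.le, hs.2⟩) hε
    _ = ‖y a‖ + (∫ s in a..b, ε s) + K * ∫ s in a..t, ‖y s‖ := by ring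

theorem memLp_two_norm_of_intervalIntegrable_sq {E : Type*} [NormedAddCommGroup E]
    {v : ℝ → E} {a b : ℝ} (h : IntervalIntegrable (fun t => ‖v t‖ ^ 2) volume a b) :
    MemLp (fun t => ‖v t‖) 2 (volume.restrict (Ioc a b)) := by
  have hmeas : AEStronglyMeasurable (fun t => ‖v t‖) (volume.restrict (Ioc a b)) :=
    (Real.continuous_sqrt.comp_aestronglyMeasurable h.1.aestronglyMeasurable).congr
      (.of_forall fun t => Real.sqrt_sq (norm_nonneg _))
  exact (memLp_two_iff_integrable_sq hmeas).2 h.1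

theorem integral_le_sqrt_integral_sq {Ω : Type*} [MeasurableSpace Ω] {μ : Measure Ω}
    [IsProbabilityMeasure μ] {X : Ω → ℝ} (hX : MemLp X 2 μ) :
    ∫ ω, X ω ∂μ ≤ √(∫ ω, X ω ^ 2 ∂μ) := by
  have hvar := ProbabilityTheory.variance_nonneg X μ
  rw [ProbabilityTheory.variance_eq_sub hX] at hvar
  exact Real.le_sqrt_of_sq_le (by simpa using hvar)

theorem intervalIntegral_le_sqrt_intervalIntegral_sq {g : ℝ → ℝ}
    (hg : MemLp g 2 (volume.restrict (Ioc 0 1))) :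
    ∫ s in (0:ℝ)..1, g s ≤ √(∫ s in (0:ℝ)..1, g s ^ 2) := by
  have : IsProbabilityMeasure (volume.restrict (Ioc (0:ℝ) 1)) := ⟨by simp⟩
  simpa only [intervalIntegral.integral_of_le zero_le_one] using integral_le_sqrt_integral_sq hg

theorem flow_lipschitz_in_input_general (n m q : ℕ) (L C : ℝ) (hL : 0 < L) (hC : 0 < C)
    (f : ℝ → EuclideanSpace ℝ (Fin n) → EuclideanSpace ℝ (Fin m) → Fin q →
      EuclideanSpace ℝ (Fin n))
    (U : Set (EuclideanSpace ℝ (Fin m)))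
    (hLip : ∀ (i : Fin q) (t₁ t₂ : ℝ) x₁ x₂ u₁ u₂,
      ‖f t₁ x₁ u₁ i - f t₂ x₂ u₂ i‖ ≤ L * (|t₁ - t₂| + ‖x₁ - x₂‖ + ‖u₁ - u₂‖))
    (hbd : ∀ (t : ℝ) x u (i : Fin q), ‖f t x u i‖ ≤ C)
    (x₀ : EuclideanSpace ℝ (Fin n)) :
    ∃ L' > (0:ℝ),
      ∀ (u₁ u₂ : ℝ → EuclideanSpace ℝ (Fin m)) (d₁ d₂ : ℝ → EuclideanSpace ℝ (Fin q))
        (x₁ x₂ : ℝ → EuclideanSpace ℝ (Fin n)),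
        (∀ t ∈ Set.Icc (0:ℝ) 1, u₁ t ∈ U) → (∀ t ∈ Set.Icc (0:ℝ) 1, u₂ t ∈ U) →
        (∀ t ∈ Set.Icc (0:ℝ) 1, (∀ i, d₁ t i ∈ Set.Icc (0:ℝ) 1) ∧ ∑ i, d₁ t i = 1) →
        (∀ t ∈ Set.Icc (0:ℝ) 1, (∀ i, d₂ t i ∈ Set.Icc (0:ℝ) 1) ∧ ∑ i, d₂ t i = 1) →
        IntervalIntegrable (fun t => ‖u₁ t - u₂ t‖ ^ 2) volume 0 1 →
        IntervalIntegrable (fun t => ‖d₁ t - d₂ t‖ ^ 2) volume 0 1 →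
        x₁ 0 = x₀ → x₂ 0 = x₀ →
        (∀ t ∈ Set.Icc (0:ℝ) 1, HasDerivAt x₁ (∑ i, d₁ t i • f t (x₁ t) (u₁ t) i) t) →
        (∀ t ∈ Set.Icc (0:ℝ) 1, HasDerivAt x₂ (∑ i, d₂ t i • f t (x₂ t) (u₂ t) i) t) →
        ∀ t ∈ Set.Icc (0:ℝ) 1,
          ‖x₁ t - x₂ t‖ ≤ L' *
            (Real.sqrt (∫ s in (0:ℝ)..1, ‖u₁ s - u₂ s‖ ^ 2) +
             Real.sqrt (∫ s in (0:ℝ)..1, ‖d₁ s - d₂ s‖ ^ 2)) := by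
  refine ⟨Real.exp L * (L + C * q), by positivity, ?_⟩
  intro u₁ u₂ d₁ d₂ x₁ x₂ _ _ hd₁ _ hu hd hx₁0 hx₂0 hx₁ hx₂ t ht
  set Su := √(∫ s in (0:ℝ)..1, ‖u₁ s - u₂ s‖ ^ 2)
  set Sd := √(∫ s in (0:ℝ)..1, ‖d₁ s - d₂ s‖ ^ 2)
  set ε : ℝ → ℝ := fun s => L * ‖u₁ s - u₂ s‖ + C * q * ‖d₁ s - d₂ s‖
  have hu₂ := memLp_two_norm_of_intervalIntegrable_sq hu
  have hd₂ := memLp_two_norm_of_intervalIntegrable_sq hd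
  have hL2L1 {g : ℝ → ℝ} (hg : MemLp g 2 (volume.restrict (Ioc 0 1))) :
      IntervalIntegrable g volume 0 1 :=
    (intervalIntegrable_iff_integrableOn_Ioc_of_le zero_le_one).2 (hg.integrable one_le_two)
  have hεint : ∫ s in (0:ℝ)..1, ε s ≤ L * Su + C * q * Sd := by
    rw [intervalIntegral.integral_add ((hL2L1 hu₂).const_mul L) ((hL2L1 hd₂).const_mul _),
      intervalIntegral.integral_const_mul, intervalIntegral.integral_const_mul]
    gcongr <;> exact intervalIntegral_le_sqrt_intervalIntegral_sq ‹_›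
  have hfield : ∀ s ∈ Icc (0:ℝ) 1,
      ‖relaxedField f s (x₁ s) (u₁ s) (d₁ s) - relaxedField f s (x₂ s) (u₂ s) (d₂ s)‖
        ≤ L * ‖(x₁ - x₂) s‖ + ε s := fun s hs =>
    (norm_relaxedField_sub_le (fun i _ _ _ _ => by simpa using hLip i s s _ _ _ _) (hbd s) hC.le
      (fun i => ((hd₁ s hs).1 i).1) (hd₁ s hs).2).trans_eq (by simp only [ε, Pi.sub_apply]; ring)
  have hgron : ‖x₁ t - x₂ t‖ ≤ (∫ s in (0:ℝ)..1, ε s) * Real.exp (L * t) := by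
    simpa [hx₁0, hx₂0] using norm_le_mul_exp_of_norm_deriv_le hL.le
      (fun s hs => (hx₁ s hs).sub (hx₂ s hs))
      (((hL2L1 hu₂).const_mul L).add ((hL2L1 hd₂).const_mul _)) (fun s _ => by positivity)
      hfield t ht
  have hS : L * Su + C * q * Sd ≤ (L + C * q) * (Su + Sd) := by
    nlinarith [Real.sqrt_nonneg (∫ s in (0:ℝ)..1, ‖u₁ s - u₂ s‖ ^ 2),
      Real.sqrt_nonneg (∫ s in (0:ℝ)..1, ‖d₁ s - d₂ s‖ ^ 2), mul_nonneg hC.le q.cast_nonneg]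
  calc ‖x₁ t - x₂ t‖ ≤ (L + C * q) * (Su + Sd) * Real.exp L := by
        refine hgron.trans ?_
        gcongr ?_ * ?_
        · exact hεint.trans hS
        · exact Real.exp_le_exp.2 (mul_le_of_le_one_right hL.le ht.2)
    _ = Real.exp L * (L + C * q) * (Su + Sd) := by ring

/-- Lipschitz continuity of the flow with respect to the relaxed input: under the standing
Lipschitz and boundedness assumptions, there exists `L' > 0` such that for any two relaxed
inputs `ξ₁ = (u₁,d₁)` and `ξ₂ = (u₂,d₂)` with corresponding trajectories `x₁, x₂`
(same initial condition), `‖x₁(t) - x₂(t)‖₂ ≤ L' (‖u₁ - u₂‖_{L²} + ‖d₁ - d₂‖_{L²})`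
uniformly in `t ∈ [0,1]`. -/
theorem flow_lipschitz_in_input (n m q : ℕ) (L C : ℝ) (hL : 0 < L) (hC : 0 < C)
    (f : ℝ → EuclideanSpace ℝ (Fin n) → EuclideanSpace ℝ (Fin m) → Fin q →
      EuclideanSpace ℝ (Fin n))
    (U : Set (EuclideanSpace ℝ (Fin m))) (hU : Bornology.IsBounded U) (hUconv : Convex ℝ U)
    (hLip : ∀ (i : Fin q) (t₁ t₂ : ℝ) x₁ x₂ u₁ u₂,
      ‖f t₁ x₁ u₁ i - f t₂ x₂ u₂ i‖ ≤ L * (|t₁ - t₂| + ‖x₁ - x₂‖ + ‖u₁ - u₂‖))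
    (hbd : ∀ (t : ℝ) x u (i : Fin q), ‖f t x u i‖ ≤ C)
    (x₀ : EuclideanSpace ℝ (Fin n)) :
    ∃ L' > (0:ℝ),
      ∀ (u₁ u₂ : ℝ → EuclideanSpace ℝ (Fin m)) (d₁ d₂ : ℝ → EuclideanSpace ℝ (Fin q))
        (x₁ x₂ : ℝ → EuclideanSpace ℝ (Fin n)),
        (∀ t ∈ Set.Icc (0:ℝ) 1, u₁ t ∈ U) → (∀ t ∈ Set.Icc (0:ℝ) 1, u₂ t ∈ U) →
        (∀ t ∈ Set.Icc (0:ℝ) 1, (∀ i, d₁ t i ∈ Set.Icc (0:ℝ) 1) ∧ ∑ i, d₁ t i = 1) →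
        (∀ t ∈ Set.Icc (0:ℝ) 1, (∀ i, d₂ t i ∈ Set.Icc (0:ℝ) 1) ∧ ∑ i, d₂ t i = 1) →
        IntervalIntegrable (fun t => ‖u₁ t - u₂ t‖ ^ 2) volume 0 1 →
        IntervalIntegrable (fun t => ‖d₁ t - d₂ t‖ ^ 2) volume 0 1 →
        x₁ 0 = x₀ → x₂ 0 = x₀ →
        (∀ t ∈ Set.Icc (0:ℝ) 1, HasDerivAt x₁ (∑ i, d₁ t i • f t (x₁ t) (u₁ t) i) t) →
        (∀ t ∈ Set.Icc (0:ℝ) 1, HasDerivAt x₂ (∑ i, d₂ t i • f t (x₂ t) (u₂ t) i) t) →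
        ∀ t ∈ Set.Icc (0:ℝ) 1,
          ‖x₁ t - x₂ t‖ ≤ L' *
            (Real.sqrt (∫ s in (0:ℝ)..1, ‖u₁ s - u₂ s‖ ^ 2) +
             Real.sqrt (∫ s in (0:ℝ)..1, ‖d₁ s - d₂ s‖ ^ 2)) :=
  flow_lipschitz_in_input_general n m q L C hL hC f U hLip hbd x₀
end
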